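/- Suppose the (6s,M)-th RICL constant of A satisfies δ_{6s,M} < 1/√3 and w are weights constant on levels. Then for all x ∈ C^N, e ∈ C^m, the IHTL sequence with sparsities (2s,M), y = Ax + e, x^{(0)} = 0 satisfies ‖x − x^{(n)}‖_{ℓ¹_w} ≤ C(√ζ/√ξ) σ_{s,M}(x)_{ℓ¹_w} + D√ζ‖e‖₂ + 2√ζ ρⁿ‖x‖₂ for all n ≥ 0, where ρ = √3 δ_{6s,M}, ζ = Σ_i (w^{(i)})² s_i, ξ = min_i (w^{(i)})² s_i, and C, D > 0 depend only on δ_{6s,M}. -/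

import Mathlib

noncomputable section

open scoped BigOperators Classical

namespace SIL

/-- The index set of level `k` (0-indexed): indices `i` with `M k ≤ i < M (k+1)`. -/
def level (N : ℕ) (M : ℕ → ℕ) (k : ℕ) : Finset (Fin N) :=
  Finset.univ.filter fun i => M k ≤ (i : ℕ) ∧ (i : ℕ) < M (k + 1)

/-- Validity of the sparsity levels `0 = M₀ < M₁ < ⋯ < M_r = N`. -/
def LevelsOK (N r : ℕ) (M : ℕ → ℕ) : Prop :=
  M 0 = 0 ∧ M r = N ∧ ∀ k < r, M k < M (k + 1)

/-- Support of a vector, as a finset. -/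
def supp {N : ℕ} (x : Fin N → ℂ) : Finset (Fin N) :=
  Finset.univ.filter fun i => x i ≠ 0

/-- An `(s,M)`-sparse index set: at most `s k` indices in each level `k`. -/
def SparseSet (N r : ℕ) (M s : ℕ → ℕ) (Δ : Finset (Fin N)) : Prop :=
  ∀ k < r, (Δ ∩ level N M k).card ≤ s k

/-- An `(s,M)`-sparse in levels vector. -/
def Sparse {N : ℕ} (r : ℕ) (M s : ℕ → ℕ) (x : Fin N → ℂ) : Prop :=
  SparseSet N r M s (supp x)

/-- Squared ℓ² norm. -/
def n2sq {ι : Type*} [Fintype ι] (x : ι → ℂ) : ℝ := ∑ i, ‖x i‖ ^ 2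

/-- ℓ² norm. -/
def n2 {ι : Type*} [Fintype ι] (x : ι → ℂ) : ℝ := Real.sqrt (n2sq x)

/-- Weighted ℓ¹ norm. -/
def wn1 {ι : Type*} [Fintype ι] (w : ι → ℝ) (x : ι → ℂ) : ℝ := ∑ i, w i * ‖x i‖

/-- Standard inner product `⟨x,y⟩ = ∑ xᵢ conj(yᵢ)`. -/
def inr {ι : Type*} [Fintype ι] (x y : ι → ℂ) : ℂ := ∑ i, x i * star (y i)

/-- Coordinate projection onto an index set. -/
def proj {N : ℕ} (Δ : Finset (Fin N)) (x : Fin N → ℂ) : Fin N → ℂ :=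
  fun i => if i ∈ Δ then x i else 0

/-- The two-sided restricted isometry-in-levels inequality with constant `δ`. -/
def RIPBound {m N : ℕ} (A : Matrix (Fin m) (Fin N) ℂ) (r : ℕ) (M s : ℕ → ℕ) (δ : ℝ) : Prop :=
  ∀ x : Fin N → ℂ, Sparse r M s x →
    (1 - δ) * n2sq x ≤ n2sq (A.mulVec x) ∧ n2sq (A.mulVec x) ≤ (1 + δ) * n2sq x

/-- The restricted isometry constant in levels `δ_{s,M}`: the smallest `δ ≥ 0`
satisfying the RIP-in-levels inequalities. -/
def ricl {m N : ℕ} (A : Matrix (Fin m) (Fin N) ℂ) (r : ℕ) (M s : ℕ → ℕ) : ℝ :=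
  sInf {δ : ℝ | 0 ≤ δ ∧ RIPBound A r M s δ}

/-- Best `(s,M)`-term approximation error in the weighted ℓ¹ norm. -/
def bestApprox {N : ℕ} (r : ℕ) (M s : ℕ → ℕ) (w : Fin N → ℝ) (x : Fin N → ℂ) : ℝ :=
  sInf {t : ℝ | ∃ z : Fin N → ℂ, Sparse r M s z ∧ t = wn1 w (x - z)}

/-- `ζ = ∑ₖ (w^{(k)})² sₖ`. -/
def zeta (r : ℕ) (s : ℕ → ℕ) (wl : ℕ → ℝ) : ℝ :=
  ∑ k ∈ Finset.range r, wl k ^ 2 * (s k : ℝ)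

/-- `ξ = minₖ (w^{(k)})² sₖ`. -/
def xiMin (r : ℕ) (s : ℕ → ℕ) (wl : ℕ → ℝ) : ℝ :=
  if h : (Finset.range r).Nonempty then (Finset.range r).inf' h fun k => wl k ^ 2 * (s k : ℝ)
  else 0

/-- `T` is a set collecting, within each level `k`, (the indices of) `s k`
largest-in-absolute-value entries of `z` (or all of the level if it is smaller). -/
def IsTopSet {N : ℕ} (r : ℕ) (M s : ℕ → ℕ) (z : Fin N → ℂ) (T : Finset (Fin N)) : Prop :=
  (∀ k < r, (T ∩ level N M k).card = min (s k) (level N M k).card) ∧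
  (∀ k < r, ∀ i ∈ T ∩ level N M k, ∀ j ∈ level N M k \ T, ‖z j‖ ≤ ‖z i‖)

/-- `h` is a hard thresholding in levels `H_{s,M}(z)` of `z`. -/
def IsThresh {N : ℕ} (r : ℕ) (M s : ℕ → ℕ) (z h : Fin N → ℂ) : Prop :=
  ∃ T : Finset (Fin N), IsTopSet r M s z T ∧ h = proj T z

/-- `X` is a sequence of IHTL iterates with data `(A, y)` and sparsities `(s, M)`. -/
def IHTLSeq {m N : ℕ} (A : Matrix (Fin m) (Fin N) ℂ) (r : ℕ) (M s : ℕ → ℕ)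
    (y : Fin m → ℂ) (X : ℕ → Fin N → ℂ) : Prop :=
  ∀ n, IsThresh r M s (X n + A.conjTranspose.mulVec (y - A.mulVec (X n))) (X (n + 1))

/-- `X` is a sequence of CoSaMPL iterates with data `(A, y)` and sparsities `(s, M)`. -/
def CoSaMPLSeq {m N : ℕ} (A : Matrix (Fin m) (Fin N) ℂ) (r : ℕ) (M s : ℕ → ℕ)
    (y : Fin m → ℂ) (X : ℕ → Fin N → ℂ) : Prop :=
  ∀ n, ∃ (T : Finset (Fin N)) (u : Fin N → ℂ),
    IsTopSet r M (fun k => 2 * s k) (A.conjTranspose.mulVec (y - A.mulVec (X n))) T ∧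
    supp u ⊆ supp (X n) ∪ T ∧
    (∀ z : Fin N → ℂ, supp z ⊆ supp (X n) ∪ T → n2 (y - A.mulVec u) ≤ n2 (y - A.mulVec z)) ∧
    IsThresh r M s u (X (n + 1))

-- Part A: norm basics
section NormBasics
variable {ι : Type*} [Fintype ι]

def toE {N : ℕ} (x : Fin N → ℂ) : EuclideanSpace ℂ (Fin N) :=
  (WithLp.equiv 2 (Fin N → ℂ)).symm x

lemma n2sq_nonneg (x : ι → ℂ) : 0 ≤ n2sq x :=
  Finset.sum_nonneg fun i _ => by positivity

lemma n2_nonneg (x : ι → ℂ) : 0 ≤ n2 x := Real.sqrt_nonneg _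

lemma n2_sq (x : ι → ℂ) : n2 x ^ 2 = n2sq x := Real.sq_sqrt (n2sq_nonneg x)

lemma n2_eq_norm {N : ℕ} (x : Fin N → ℂ) : n2 x = ‖toE x‖ := by
  rw [EuclideanSpace.norm_eq]
  rfl

lemma n2sq_eq_norm_sq {N : ℕ} (x : Fin N → ℂ) : n2sq x = ‖toE x‖ ^ 2 := by
  rw [← n2_eq_norm, n2_sq]

lemma toE_add {N : ℕ} (x y : Fin N → ℂ) : toE (x + y) = toE x + toE y := rfl
lemma toE_sub {N : ℕ} (x y : Fin N → ℂ) : toE (x - y) = toE x - toE y := rfl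

lemma n2_add_le {N : ℕ} (x y : Fin N → ℂ) : n2 (x + y) ≤ n2 x + n2 y := by
  rw [n2_eq_norm, n2_eq_norm, n2_eq_norm, toE_add]; exact norm_add_le _ _

lemma n2_sum_le {N : ℕ} {α : Type*} (F : Finset α) (f : α → Fin N → ℂ) :
    n2 (∑ j ∈ F, f j) ≤ ∑ j ∈ F, n2 (f j) := by
  classical
  induction F using Finset.induction with
  | empty => simp [n2, n2sq]
  | @insert a F' h ih =>
      rw [Finset.sum_insert h, Finset.sum_insert h]
      exact le_trans (n2_add_le _ _) (by linarith)

lemma inr_eq_inner {N : ℕ} (x y : Fin N → ℂ) :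
    inr x y = @inner ℂ _ _ (toE y) (toE x) := by
  rw [PiLp.inner_apply]
  unfold inr
  congr 1

lemma norm_inr_le {N : ℕ} (x y : Fin N → ℂ) : ‖inr x y‖ ≤ n2 x * n2 y := by
  rw [inr_eq_inner, n2_eq_norm, n2_eq_norm]
  exact le_trans (norm_inner_le_norm _ _) (by rw [mul_comm])

lemma n2sq_add_expand {N : ℕ} (x y : Fin N → ℂ) :
    n2sq (x + y) = n2sq x + n2sq y + 2 * (Complex.re (inr x y)) := by
  rw [n2sq_eq_norm_sq, n2sq_eq_norm_sq, n2sq_eq_norm_sq, toE_add, inr_eq_inner]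
  have h1 := @norm_add_sq ℂ _ _ _ _ (toE x) (toE y)
  have h2 : RCLike.re (@inner ℂ _ _ (toE x) (toE y)) =
      Complex.re (@inner ℂ _ _ (toE y) (toE x)) := by
    rw [inner_re_symm]; rfl
  rw [h1, ← h2]
  ring
end NormBasics

-- Part B: proj and supp basics
section ProjSupp
variable {N : ℕ}

lemma mem_supp {x : Fin N → ℂ} {i : Fin N} : i ∈ supp x ↔ x i ≠ 0 := by
  simp [supp]

lemma supp_add_subset (x y : Fin N → ℂ) : supp (x + y) ⊆ supp x ∪ supp y := by
  intro i hi
  rw [mem_supp] at hi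
  rw [Finset.mem_union, mem_supp, mem_supp]
  by_contra h
  push_neg at h
  exact hi (by simp [Pi.add_apply, h.1, h.2])

lemma supp_sub_subset (x y : Fin N → ℂ) : supp (x - y) ⊆ supp x ∪ supp y := by
  intro i hi
  rw [mem_supp] at hi
  rw [Finset.mem_union, mem_supp, mem_supp]
  by_contra h
  push_neg at h
  exact hi (by simp [Pi.sub_apply, h.1, h.2])

lemma supp_proj_subset (Δ : Finset (Fin N)) (x : Fin N → ℂ) : supp (proj Δ x) ⊆ Δ := by
  intro i hi
  rw [mem_supp] at hi
  by_contra h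
  exact hi (by simp [proj, h])

lemma proj_apply_mem {Δ : Finset (Fin N)} {x : Fin N → ℂ} {i : Fin N} (h : i ∈ Δ) :
    proj Δ x i = x i := by simp [proj, h]

lemma proj_apply_not_mem {Δ : Finset (Fin N)} {x : Fin N → ℂ} {i : Fin N} (h : i ∉ Δ) :
    proj Δ x i = 0 := by simp [proj, h]

lemma n2sq_proj (Δ : Finset (Fin N)) (x : Fin N → ℂ) :
    n2sq (proj Δ x) = ∑ i ∈ Δ, ‖x i‖ ^ 2 := by
  unfold n2sq
  rw [← Finset.sum_filter_add_sum_filter_not Finset.univ (· ∈ Δ)]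
  have h1 : ∑ i ∈ Finset.univ.filter (· ∈ Δ), ‖proj Δ x i‖ ^ 2 = ∑ i ∈ Δ, ‖x i‖ ^ 2 := by
    rw [Finset.filter_mem_eq_inter, Finset.univ_inter]
    exact Finset.sum_congr rfl fun i hi => by rw [proj_apply_mem hi]
  have h2 : ∑ i ∈ Finset.univ.filter (¬ · ∈ Δ), ‖proj Δ x i‖ ^ 2 = 0 :=
    Finset.sum_eq_zero fun i hi => by
      rw [proj_apply_not_mem (Finset.mem_filter.mp hi).2]; simp
  rw [h1, h2, add_zero]

lemma n2sq_proj_le (Δ : Finset (Fin N)) (x : Fin N → ℂ) : n2sq (proj Δ x) ≤ n2sq x := by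
  rw [n2sq_proj]
  exact Finset.sum_le_sum_of_subset_of_nonneg (Finset.subset_univ _)
    (fun i _ _ => by positivity)

lemma n2_proj_le (Δ : Finset (Fin N)) (x : Fin N → ℂ) : n2 (proj Δ x) ≤ n2 x :=
  Real.sqrt_le_sqrt (n2sq_proj_le Δ x)

lemma wn1_nonneg {w : Fin N → ℝ} (hw : ∀ i, 0 ≤ w i) (x : Fin N → ℂ) : 0 ≤ wn1 w x :=
  Finset.sum_nonneg fun i _ => mul_nonneg (hw i) (norm_nonneg _)

end ProjSupp

-- Part C: levels partition
section Levels
variable {N r : ℕ} {M : ℕ → ℕ}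

lemma mem_level {i : Fin N} {k : ℕ} : i ∈ level N M k ↔ M k ≤ (i : ℕ) ∧ (i : ℕ) < M (k+1) := by
  simp [level]

lemma M_mono (hM : LevelsOK N r M) {k l : ℕ} (hk : k ≤ l) (hl : l ≤ r) : M k ≤ M l := by
  induction l with
  | zero => obtain rfl := Nat.le_zero.mp hk; exact le_refl _
  | succ l ih =>
      rcases Nat.eq_or_lt_of_le hk with h | h
      · exact le_of_eq (congrArg M h)
      · have h1 : M l ≤ M (l+1) := le_of_lt (hM.2.2 l (by omega))
        have := ih (by omega) (by omega)
        omega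

lemma exists_level (hM : LevelsOK N r M) (i : Fin N) : ∃ k < r, i ∈ level N M k := by
  have hi : (i : ℕ) < M r := by rw [hM.2.1]; exact i.2
  have h0 : M 0 ≤ (i : ℕ) := by rw [hM.1]; exact Nat.zero_le _
  have hr0 : 0 < r := by
    by_contra h
    push_neg at h
    interval_cases r
    omega
  classical
  set P : ℕ → Prop := fun k => M k ≤ (i : ℕ) with hP
  have hP0 : P 0 := h0
  set k := Nat.findGreatest P r with hkdef
  have hk_spec : P k := Nat.findGreatest_spec (Nat.zero_le r) hP0
  have hk_le : k ≤ r := Nat.findGreatest_le r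
  have hkr : k < r := by
    rcases Nat.eq_or_lt_of_le hk_le with h | h
    · exfalso
      have h2 : M r ≤ (i : ℕ) := h ▸ hk_spec
      omega
    · exact h
  have hnot : ¬ P (k+1) := Nat.findGreatest_is_greatest (Nat.lt_succ_self k) (by omega)
  exact ⟨k, hkr, mem_level.mpr ⟨hk_spec, by omega⟩⟩

lemma level_disjoint (hM : LevelsOK N r M) {k l : ℕ} (hk : k < r) (hl : l < r) (hne : k ≠ l) :
    Disjoint (level N M k) (level N M l) := by
  wlog h : k < l generalizing k l
  · exact (this hl hk hne.symm (by omega)).symm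
  · rw [Finset.disjoint_left]
    intro i hik hil
    have h1 := (mem_level.mp hik).2
    have h2 := (mem_level.mp hil).1
    have : M (k+1) ≤ M l := M_mono hM (by omega) (by omega)
    omega

lemma univ_eq_biUnion_levels (hM : LevelsOK N r M) :
    (Finset.univ : Finset (Fin N)) = (Finset.range r).biUnion (fun k => level N M k) := by
  ext i
  simp only [Finset.mem_univ, true_iff, Finset.mem_biUnion, Finset.mem_range]
  obtain ⟨k, hk, hik⟩ := exists_level hM i
  exact ⟨k, hk, hik⟩

lemma sum_levels (hM : LevelsOK N r M) (f : Fin N → ℝ) :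
    ∑ i, f i = ∑ k ∈ Finset.range r, ∑ i ∈ level N M k, f i := by
  rw [univ_eq_biUnion_levels hM, Finset.sum_biUnion]
  intro k hk l hl hne
  exact level_disjoint hM (Finset.mem_range.mp hk) (Finset.mem_range.mp hl) hne

end Levels

-- Part D: top sets
section TopSets
variable {N r : ℕ} {M : ℕ → ℕ}

lemma exists_maxima_subset {ι : Type*} [DecidableEq ι] (F : Finset ι) (f : ι → ℝ) :
    ∀ m : ℕ, m ≤ F.card →
    ∃ T ⊆ F, T.card = m ∧ ∀ i ∈ T, ∀ j ∈ F \ T, f j ≤ f i := by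
  intro m
  induction m with
  | zero => intro _; exact ⟨∅, Finset.empty_subset F, Finset.card_empty, by simp⟩
  | succ m ih =>
      intro hm
      obtain ⟨T, hTF, hTcard, hTmax⟩ := ih (by omega)
      have hne : (F \ T).Nonempty := by
        rw [← Finset.card_pos, Finset.card_sdiff_of_subset hTF]
        omega
      obtain ⟨a, haFT, hamax⟩ := Finset.exists_max_image (F \ T) f hne
      refine ⟨insert a T, ?_, ?_, ?_⟩
      · intro i hi
        rcases Finset.mem_insert.mp hi with h | h
        · exact h ▸ (Finset.mem_sdiff.mp haFT).1
        · exact hTF h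
      · rw [Finset.card_insert_of_notMem (fun h => (Finset.mem_sdiff.mp haFT).2 h), hTcard]
      · intro i hi j hj
        have hj' : j ∈ F \ T := by
          rw [Finset.mem_sdiff] at hj ⊢
          exact ⟨hj.1, fun h => hj.2 (Finset.mem_insert_of_mem h)⟩
        rcases Finset.mem_insert.mp hi with h | h
        · exact h ▸ hamax j hj'
        · exact hTmax i h j hj'

lemma topset_extend (hM : LevelsOK N r M) (s c : ℕ → ℕ) (x : Fin N → ℂ)
    (T : Finset (Fin N)) (hT : IsTopSet r M c x T)
    (hTsub : ∀ k < r, T ∩ level N M k ⊆ level N M k) :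
    ∃ T' : Finset (Fin N), T ⊆ T' ∧ IsTopSet r M (fun k => c k + s k) x T' ∧
      (T' \ T) ⊆ Finset.univ := by
  classical
  have hEx : ∀ k : ℕ, ∃ E : Finset (Fin N), k < r →
      E ⊆ level N M k \ T ∧
      E.card = min (c k + s k) (level N M k).card - min (c k) (level N M k).card ∧
      ∀ i ∈ E, ∀ j ∈ (level N M k \ T) \ E, ‖x j‖ ≤ ‖x i‖ := by
    intro k
    by_cases hk : k < r
    · have hcard : (level N M k \ T).card
          = (level N M k).card - min (c k) (level N M k).card := by
        have h1 : level N M k \ T = level N M k \ (T ∩ level N M k) := by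
          ext i; simp only [Finset.mem_sdiff, Finset.mem_inter]; tauto
        rw [h1, Finset.card_sdiff_of_subset (Finset.inter_subset_right), (hT.1 k hk)]
      have hm : min (c k + s k) (level N M k).card - min (c k) (level N M k).card
          ≤ (level N M k \ T).card := by
        rw [hcard]; omega
      obtain ⟨E, hE1, hE2, hE3⟩ := exists_maxima_subset (level N M k \ T) (fun i => ‖x i‖) _ hm
      exact ⟨E, fun _ => ⟨hE1, hE2, hE3⟩⟩
    · exact ⟨∅, fun h => absurd h hk⟩
  choose E hE using hEx
  set T' := T ∪ (Finset.range r).biUnion E with hT'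
  have hsubT' : T ⊆ T' := Finset.subset_union_left
  have hInterE : ∀ k < r, ∀ l < r, l ≠ k → E l ∩ level N M k = ∅ := by
    intro k hk l hl hlk
    obtain ⟨hE1, _, _⟩ := hE l hl
    apply Finset.eq_empty_of_forall_notMem
    intro i hi
    rw [Finset.mem_inter] at hi
    have h1 : i ∈ level N M l := (Finset.mem_sdiff.mp (hE1 hi.1)).1
    exact (Finset.disjoint_left.mp (level_disjoint hM hl hk hlk)) h1 hi.2
  have hT'int : ∀ k < r, T' ∩ level N M k = (T ∩ level N M k) ∪ E k := by
    intro k hk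
    obtain ⟨hE1, _, _⟩ := hE k hk
    ext i
    simp only [hT', Finset.mem_inter, Finset.mem_union, Finset.mem_biUnion, Finset.mem_range]
    constructor
    · rintro ⟨h1 | ⟨l, hl, hil⟩, h2⟩
      · exact Or.inl ⟨h1, h2⟩
      · by_cases hlk : l = k
        · exact Or.inr (hlk ▸ hil)
        · exact absurd (Finset.mem_inter.mpr ⟨hil, h2⟩)
            (by rw [hInterE k hk l hl hlk]; exact Finset.notMem_empty i)
    · rintro (⟨h1, h2⟩ | h)
      · exact ⟨Or.inl h1, h2⟩
      · exact ⟨Or.inr ⟨k, hk, h⟩, (Finset.mem_sdiff.mp (hE1 h)).1⟩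
  refine ⟨T', hsubT', ⟨?_, ?_⟩, Finset.subset_univ _⟩
  · intro k hk
    obtain ⟨hE1, hE2, _⟩ := hE k hk
    rw [hT'int k hk, Finset.card_union_of_disjoint, hT.1 k hk, hE2]
    · show _ = min (c k + s k) (level N M k).card
      have h2 : min (c k) (level N M k).card ≤ (level N M k).card := Nat.min_le_right _ _
      omega
    · rw [Finset.disjoint_left]
      intro i hi hi'
      exact (Finset.mem_sdiff.mp (hE1 hi')).2 (Finset.mem_inter.mp hi).1
  · intro k hk i hi j hj
    rw [hT'int k hk] at hi
    rw [Finset.mem_sdiff] at hj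
    have hjT : j ∉ T := fun h => hj.2 (hsubT' h)
    rcases Finset.mem_union.mp hi with h | h
    · exact hT.2 k hk i h j (Finset.mem_sdiff.mpr ⟨hj.1, hjT⟩)
    · obtain ⟨hE1, _, hE3⟩ := hE k hk
      apply hE3 i h j
      rw [Finset.mem_sdiff, Finset.mem_sdiff]
      refine ⟨⟨hj.1, hjT⟩, fun hjE => hj.2 ?_⟩
      exact Finset.mem_union_right _ (Finset.mem_biUnion.mpr ⟨k, Finset.mem_range.mpr hk, hjE⟩)

lemma topset_empty (s : ℕ → ℕ) (x : Fin N → ℂ) :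
    IsTopSet r M (fun _ => 0) x (∅ : Finset (Fin N)) := by
  constructor
  · intro k hk; simp
  · intro k hk i hi; simp at hi

lemma exists_chain (hM : LevelsOK N r M) (s : ℕ → ℕ) (x : Fin N → ℂ) :
    ∃ W : ℕ → Finset (Fin N), W 0 = ∅ ∧ (∀ j, W j ⊆ W (j+1)) ∧
      (∀ j, IsTopSet r M (fun k => j * s k) x (W j)) := by
  classical
  have step : ∀ (j : ℕ) (T : Finset (Fin N)), ∃ T' : Finset (Fin N),
      IsTopSet r M (fun k => j * s k) x T → (T ⊆ T' ∧ IsTopSet r M (fun k => (j+1) * s k) x T') := by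
    intro j T
    by_cases hT : IsTopSet r M (fun k => j * s k) x T
    · obtain ⟨T', h1, h2, _⟩ := topset_extend hM s (fun k => j * s k) x T hT
        (fun k _ => Finset.inter_subset_right)
      refine ⟨T', fun _ => ⟨h1, ?_⟩⟩
      have : (fun k => j * s k + s k) = (fun k => (j+1) * s k) := by
        funext k; ring
      exact this ▸ h2
    · exact ⟨T, fun h => absurd h hT⟩
  choose f hf using step
  refine ⟨fun j => Nat.rec ∅ (fun j T => f j T) j, rfl, ?_, ?_⟩
  · intro j
    have htop : ∀ j, IsTopSet r M (fun k => j * s k) x (Nat.rec ∅ (fun j T => f j T) j) := by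
      intro j
      induction j with
      | zero => simpa using topset_empty (r := r) (M := M) s x
      | succ j ih => exact (hf j _ ih).2
    exact (hf j _ (htop j)).1
  · intro j
    induction j with
    | zero => simpa using topset_empty (r := r) (M := M) s x
    | succ j ih => exact (hf j _ ih).2

end TopSets

-- Part E: RIP lemmas
section RIP
variable {m N : ℕ} {r : ℕ} {M : ℕ → ℕ}

lemma sparse_mono {s s' : ℕ → ℕ} (h : ∀ k < r, s k ≤ s' k) {Δ : Finset (Fin N)}
    (hΔ : SparseSet N r M s Δ) : SparseSet N r M s' Δ :=
  fun k hk => le_trans (hΔ k hk) (h k hk)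

lemma sparse_subset {s : ℕ → ℕ} {Δ Γ : Finset (Fin N)} (h : Δ ⊆ Γ)
    (hΓ : SparseSet N r M s Γ) : SparseSet N r M s Δ :=
  fun k hk => le_trans (Finset.card_le_card (Finset.inter_subset_inter h (le_refl _))) (hΓ k hk)

lemma n2sq_eq_zero_iff (x : Fin N → ℂ) : n2sq x = 0 ↔ x = 0 := by
  rw [n2sq_eq_norm_sq, pow_eq_zero_iff (two_ne_zero), norm_eq_zero]
  constructor
  · intro h; funext i; exact congrArg (fun v : EuclideanSpace ℂ (Fin N) => v i) h
  · intro h; rw [h]; rfl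

lemma ricl_spec (A : Matrix (Fin m) (Fin N) ℂ) (s : ℕ → ℕ) :
    0 ≤ ricl A r M s ∧ RIPBound A r M s (ricl A r M s) := by
  classical
  set K : ℝ := ∑ i : Fin m, ∑ j : Fin N, ‖A i j‖ ^ 2 with hK
  have hK0 : 0 ≤ K := Finset.sum_nonneg fun i _ => Finset.sum_nonneg fun j _ => by positivity
  have hbound : ∀ z : Fin N → ℂ, n2sq (A.mulVec z) ≤ K * n2sq z := by
    intro z
    have h1 : ∀ i : Fin m, ‖A.mulVec z i‖ ^ 2 ≤ (∑ j, ‖A i j‖ ^ 2) * n2sq z := by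
      intro i
      have h2 : ‖A.mulVec z i‖ ≤ ∑ j, ‖A i j‖ * ‖z j‖ := by
        rw [Matrix.mulVec, dotProduct]
        refine le_trans (norm_sum_le _ _) ?_
        exact Finset.sum_le_sum fun j _ => le_of_eq (norm_mul _ _)
      have h3 : (∑ j, ‖A i j‖ * ‖z j‖) ^ 2 ≤ (∑ j, ‖A i j‖ ^ 2) * ∑ j, ‖z j‖ ^ 2 :=
        Finset.sum_mul_sq_le_sq_mul_sq Finset.univ _ _
      have h4 : 0 ≤ ∑ j, ‖A i j‖ * ‖z j‖ :=
        Finset.sum_nonneg fun j _ => mul_nonneg (norm_nonneg _) (norm_nonneg _)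
      calc ‖A.mulVec z i‖ ^ 2 ≤ (∑ j, ‖A i j‖ * ‖z j‖) ^ 2 := by
            exact pow_le_pow_left₀ (norm_nonneg _) h2 2
        _ ≤ (∑ j, ‖A i j‖ ^ 2) * ∑ j, ‖z j‖ ^ 2 := h3
        _ = (∑ j, ‖A i j‖ ^ 2) * n2sq z := rfl
    calc n2sq (A.mulVec z) = ∑ i, ‖A.mulVec z i‖ ^ 2 := rfl
      _ ≤ ∑ i : Fin m, (∑ j, ‖A i j‖ ^ 2) * n2sq z := Finset.sum_le_sum fun i _ => h1 i
      _ = K * n2sq z := by rw [hK, Finset.sum_mul]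
  have hmem : (1 + K) ∈ {δ : ℝ | 0 ≤ δ ∧ RIPBound A r M s δ} := by
    refine ⟨by linarith, fun z _ => ⟨?_, ?_⟩⟩
    · have := n2sq_nonneg (A.mulVec z)
      have := n2sq_nonneg z
      nlinarith
    · have := hbound z
      have := n2sq_nonneg z
      nlinarith
  have hne : {δ : ℝ | 0 ≤ δ ∧ RIPBound A r M s δ}.Nonempty := ⟨1 + K, hmem⟩
  have hbdd : BddBelow {δ : ℝ | 0 ≤ δ ∧ RIPBound A r M s δ} := ⟨0, fun δ hδ => hδ.1⟩
  have h0 : 0 ≤ ricl A r M s := le_csInf hne fun δ hδ => hδ.1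
  refine ⟨h0, fun z hz => ⟨?_, ?_⟩⟩
  · -- lower bound at sInf
    have key : ∀ ε > 0, (1 - (ricl A r M s + ε)) * n2sq z ≤ n2sq (A.mulVec z) := by
      intro ε hε
      obtain ⟨δ, hδmem, hδlt⟩ := Real.lt_sInf_add_pos hne hε
      have hδlt' : δ < ricl A r M s + ε := hδlt
      have h1 := (hδmem.2 z hz).1
      have h2 := n2sq_nonneg z
      nlinarith
    by_cases hz0 : n2sq z = 0
    · rw [hz0, mul_zero]; exact n2sq_nonneg _
    · have hz0' : 0 < n2sq z := lt_of_le_of_ne (n2sq_nonneg z) (Ne.symm hz0)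
      by_contra hcon
      push_neg at hcon
      set ε := ((1 - ricl A r M s) * n2sq z - n2sq (A.mulVec z)) / (2 * n2sq z) with hεdef
      have hε : 0 < ε := by
        apply div_pos; nlinarith; linarith
      have := key ε hε
      rw [hεdef] at this
      have h3 : (1 - (ricl A r M s + ((1 - ricl A r M s) * n2sq z - n2sq (A.mulVec z)) / (2 * n2sq z))) * n2sq z
          = (1 - ricl A r M s) * n2sq z - ((1 - ricl A r M s) * n2sq z - n2sq (A.mulVec z)) / 2 := by
        field_simp; ring
      rw [h3] at this
      nlinarith
  · have key : ∀ ε > 0, n2sq (A.mulVec z) ≤ (1 + (ricl A r M s + ε)) * n2sq z := by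
      intro ε hε
      obtain ⟨δ, hδmem, hδlt⟩ := Real.lt_sInf_add_pos hne hε
      have hδlt' : δ < ricl A r M s + ε := hδlt
      have h1 := (hδmem.2 z hz).2
      have h2 := n2sq_nonneg z
      nlinarith
    by_cases hz0 : n2sq z = 0
    · have := hbound z
      rw [hz0] at this ⊢
      simpa using this
    · have hz0' : 0 < n2sq z := lt_of_le_of_ne (n2sq_nonneg z) (Ne.symm hz0)
      by_contra hcon
      push_neg at hcon
      set ε := (n2sq (A.mulVec z) - (1 + ricl A r M s) * n2sq z) / (2 * n2sq z) with hεdef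
      have hε : 0 < ε := by
        apply div_pos; nlinarith; linarith
      have := key ε hε
      rw [hεdef] at this
      have h3 : (1 + (ricl A r M s + (n2sq (A.mulVec z) - (1 + ricl A r M s) * n2sq z) / (2 * n2sq z))) * n2sq z
          = (1 + ricl A r M s) * n2sq z + (n2sq (A.mulVec z) - (1 + ricl A r M s) * n2sq z) / 2 := by
        field_simp; ring
      rw [h3] at this
      nlinarith
end RIP

-- Part E2: RIP consequences
section RIP2
variable {m N : ℕ} {r : ℕ} {M : ℕ → ℕ}

lemma inr_adj (A : Matrix (Fin m) (Fin N) ℂ) (x : Fin N → ℂ) (v : Fin m → ℂ) :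
    inr (A.mulVec x) v = inr x (A.conjTranspose.mulVec v) := by
  unfold inr
  simp only [Matrix.mulVec, dotProduct, Matrix.conjTranspose_apply, star_sum,
    star_mul', star_star, Finset.sum_mul, Finset.mul_sum]
  rw [Finset.sum_comm]
  congr 1; ext i; congr 1; ext j; ring

lemma mul_star_self (z : ℂ) : z * star z = ((‖z‖ ^ 2 : ℝ) : ℂ) := by
  rw [Complex.star_def, Complex.mul_conj]
  norm_cast
  rw [Complex.normSq_eq_norm_sq]

lemma inr_proj_self (W : Finset (Fin N)) (z : Fin N → ℂ) :
    inr (proj W z) z = ((n2sq (proj W z) : ℝ) : ℂ) := by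
  unfold inr n2sq
  push_cast
  congr 1; ext i
  by_cases hi : i ∈ W
  · rw [proj_apply_mem hi, mul_star_self]
    push_cast
    ring
  · rw [proj_apply_not_mem hi]
    simp

lemma inr_smul_left (c : ℂ) (x y : Fin N → ℂ) : inr (c • x) y = c * inr x y := by
  unfold inr
  rw [Finset.mul_sum]
  congr 1; ext i
  simp [Pi.smul_apply, smul_eq_mul]; ring

lemma inr_smul_right (c : ℂ) (x y : Fin N → ℂ) : inr x (c • y) = star c * inr x y := by
  unfold inr
  rw [Finset.mul_sum]
  congr 1; ext i
  simp [Pi.smul_apply, smul_eq_mul, star_mul']; ring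

lemma inr_sub_right (x y z : Fin N → ℂ) : inr x (y - z) = inr x y - inr x z := by
  unfold inr
  rw [← Finset.sum_sub_distrib]
  congr 1; ext i
  simp [Pi.sub_apply, star_sub]; ring

lemma inr_neg_right (x y : Fin N → ℂ) : inr x (-y) = - inr x y := by
  unfold inr
  rw [← Finset.sum_neg_distrib]
  congr 1; ext i
  simp

lemma n2sq_smul (c : ℂ) (x : Fin N → ℂ) : n2sq (c • x) = ‖c‖ ^ 2 * n2sq x := by
  unfold n2sq
  rw [Finset.mul_sum]
  congr 1; ext i
  simp [Pi.smul_apply, smul_eq_mul, norm_mul]; ring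

lemma n2sq_neg (x : Fin N → ℂ) : n2sq (-x) = n2sq x := by
  unfold n2sq; congr 1; ext i; simp

lemma supp_smul_subset (c : ℂ) (x : Fin N → ℂ) : supp (c • x) ⊆ supp x := by
  intro i hi
  rw [mem_supp] at hi ⊢
  intro h
  exact hi (by simp [Pi.smul_apply, h])

lemma n2_eq_zero_iff (x : Fin N → ℂ) : n2 x = 0 ↔ x = 0 := by
  unfold n2
  rw [Real.sqrt_eq_zero (n2sq_nonneg x), n2sq_eq_zero_iff]

variable {A : Matrix (Fin m) (Fin N) ℂ} {s6 : ℕ → ℕ} {δ : ℝ}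

lemma normAz_le (hR : RIPBound A r M s6 δ) (hδ : 0 ≤ δ) {z : Fin N → ℂ}
    (hz : Sparse r M s6 z) : n2 (A.mulVec z) ≤ Real.sqrt (1 + δ) * n2 z := by
  have h := (hR z hz).2
  unfold n2
  rw [← Real.sqrt_mul (by linarith)]
  exact Real.sqrt_le_sqrt h

/-- Polarization-type off-diagonal RIP bound, `re` version. -/
lemma re_polar (hR : RIPBound A r M s6 δ) (hδ : 0 ≤ δ) {a b : Fin N → ℂ}
    (hab : SparseSet N r M s6 (supp a ∪ supp b)) :
    Complex.re (inr a b) - Complex.re (inr (A.mulVec a) (A.mulVec b))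
      ≤ δ * (n2 a * n2 b) := by
  -- first, the unscaled estimate
  have base : ∀ a b : Fin N → ℂ, SparseSet N r M s6 (supp a ∪ supp b) →
      Complex.re (inr a b) - Complex.re (inr (A.mulVec a) (A.mulVec b))
        ≤ δ / 2 * (n2sq a + n2sq b) := by
    intro a b hab
    have hsp : ∀ c : Fin N → ℂ, supp c ⊆ supp a ∪ supp b → Sparse r M s6 c :=
      fun c hc => sparse_subset hc hab
    have h1 : Sparse r M s6 (a + b) := hsp _ (supp_add_subset a b)
    have h2 : Sparse r M s6 (a - b) := hsp _ (supp_sub_subset a b)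
    have e1 := n2sq_add_expand a b
    have e2 : n2sq (a - b) = n2sq a + n2sq b - 2 * Complex.re (inr a b) := by
      have : a - b = a + (-b) := by funext i; exact sub_eq_add_neg _ _
      rw [this, n2sq_add_expand, n2sq_neg, inr_neg_right]
      simp; ring
    have e3 := n2sq_add_expand (A.mulVec a) (A.mulVec b)
    have e4 : n2sq (A.mulVec a - A.mulVec b)
        = n2sq (A.mulVec a) + n2sq (A.mulVec b) - 2 * Complex.re (inr (A.mulVec a) (A.mulVec b)) := by
      have : A.mulVec a - A.mulVec b = A.mulVec a + (-(A.mulVec b)) := by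
        funext i; exact sub_eq_add_neg _ _
      rw [this, n2sq_add_expand, n2sq_neg, inr_neg_right]
      simp; ring
    have hAadd : A.mulVec (a + b) = A.mulVec a + A.mulVec b := Matrix.mulVec_add A a b
    have hAsub : A.mulVec (a - b) = A.mulVec a - A.mulVec b := Matrix.mulVec_sub A a b
    have r1 := (hR (a + b) h1).1
    have r2 := (hR (a + b) h1).2
    have r3 := (hR (a - b) h2).1
    have r4 := (hR (a - b) h2).2
    rw [hAadd] at r1 r2
    rw [hAsub] at r3 r4
    nlinarith [n2sq_nonneg (a+b), n2sq_nonneg (a-b)]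
  -- now the scaled version
  by_cases ha : n2 a = 0
  · rw [n2_eq_zero_iff] at ha
    subst ha
    have h0 : inr (0 : Fin N → ℂ) b = 0 := by unfold inr; simp
    have h0' : A.mulVec (0 : Fin N → ℂ) = 0 := by
      funext i; simp [Matrix.mulVec, dotProduct]
    rw [h0, h0']
    have h0'' : inr (0 : Fin m → ℂ) (A.mulVec b) = 0 := by unfold inr; simp
    rw [h0'']
    simp [n2, n2sq]
  by_cases hb : n2 b = 0
  · rw [n2_eq_zero_iff] at hb
    subst hb
    have h0 : inr a (0 : Fin N → ℂ) = 0 := by unfold inr; simp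
    have h0' : A.mulVec (0 : Fin N → ℂ) = 0 := by
      funext i; simp [Matrix.mulVec, dotProduct]
    rw [h0, h0']
    have h0'' : inr (A.mulVec a) (0 : Fin m → ℂ) = 0 := by unfold inr; simp
    rw [h0'']
    simp [n2, n2sq]
  · have ha' : 0 < n2 a := lt_of_le_of_ne (n2_nonneg a) (Ne.symm ha)
    have hb' : 0 < n2 b := lt_of_le_of_ne (n2_nonneg b) (Ne.symm hb)
    set t : ℝ := Real.sqrt (n2 b / n2 a) with ht
    have ht0 : 0 < t := Real.sqrt_pos.mpr (div_pos hb' ha')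
    set a' : Fin N → ℂ := (t : ℂ) • a with ha'def
    set b' : Fin N → ℂ := ((t⁻¹ : ℝ) : ℂ) • b with hb'def
    have hsupp : SparseSet N r M s6 (supp a' ∪ supp b') :=
      sparse_subset (Finset.union_subset_union (supp_smul_subset _ a) (supp_smul_subset _ b)) hab
    have hbase := base a' b' hsupp
    have hA'a : A.mulVec a' = (t : ℂ) • A.mulVec a := by
      rw [ha'def, ← Matrix.mulVec_smul]
    have hA'b : A.mulVec b' = ((t⁻¹ : ℝ) : ℂ) • A.mulVec b := by
      rw [hb'def, ← Matrix.mulVec_smul]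
    have hire : inr a' b' = inr a b := by
      rw [ha'def, hb'def, inr_smul_left, inr_smul_right]
      have : star (((t⁻¹ : ℝ) : ℂ)) = ((t⁻¹ : ℝ) : ℂ) := by
        simp [Complex.star_def, Complex.conj_ofReal]
      rw [this]
      rw [← mul_assoc]
      norm_cast
      rw [mul_inv_cancel₀ (ne_of_gt ht0)]
      simp
    have hire2 : inr (A.mulVec a') (A.mulVec b') = inr (A.mulVec a) (A.mulVec b) := by
      rw [hA'a, hA'b, inr_smul_left, inr_smul_right]
      have : star (((t⁻¹ : ℝ) : ℂ)) = ((t⁻¹ : ℝ) : ℂ) := by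
        simp [Complex.star_def, Complex.conj_ofReal]
      rw [this, ← mul_assoc]
      norm_cast
      rw [mul_inv_cancel₀ (ne_of_gt ht0)]
      simp
    have hn2a' : n2sq a' = t ^ 2 * n2sq a := by
      rw [ha'def, n2sq_smul]
      rw [Complex.norm_real, Real.norm_eq_abs, abs_of_pos ht0]
    have hn2b' : n2sq b' = (t⁻¹) ^ 2 * n2sq b := by
      rw [hb'def, n2sq_smul]
      rw [Complex.norm_real, Real.norm_eq_abs, abs_of_pos (inv_pos.mpr ht0)]
    rw [hire, hire2, hn2a', hn2b'] at hbase
    have ht2 : t ^ 2 = n2 b / n2 a := Real.sq_sqrt (le_of_lt (div_pos hb' ha'))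
    have hn2sqa : n2sq a = n2 a ^ 2 := (n2_sq a).symm
    have hn2sqb : n2sq b = n2 b ^ 2 := (n2_sq b).symm
    have hcalc : t ^ 2 * n2sq a + (t⁻¹) ^ 2 * n2sq b = 2 * (n2 a * n2 b) := by
      rw [hn2sqa, hn2sqb, ht2]
      have hinv : (t⁻¹) ^ 2 = n2 a / n2 b := by
        rw [inv_pow, ht2, inv_div]
      rw [hinv]
      field_simp
      ring
    rw [hcalc] at hbase
    linarith

/-- Lemma A: `‖(P_W (I - A* A) b)‖ ≤ δ ‖b‖` for `W ∪ supp b` sparse. -/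
lemma proj_offdiag (hR : RIPBound A r M s6 δ) (hδ : 0 ≤ δ) {b : Fin N → ℂ}
    {W : Finset (Fin N)} (h : SparseSet N r M s6 (W ∪ supp b)) :
    n2 (proj W (b - A.conjTranspose.mulVec (A.mulVec b))) ≤ δ * n2 b := by
  set Db : Fin N → ℂ := b - A.conjTranspose.mulVec (A.mulVec b) with hDb
  set v : Fin N → ℂ := proj W Db with hv
  have hkey : n2sq v = Complex.re (inr v b) - Complex.re (inr (A.mulVec v) (A.mulVec b)) := by
    have h1 : inr v Db = (n2sq v : ℂ) := by
      rw [hv]; exact inr_proj_self W Db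
    have h2 : inr v Db = inr v b - inr v (A.conjTranspose.mulVec (A.mulVec b)) := by
      rw [hDb]; exact inr_sub_right v b _
    have h3 : inr v (A.conjTranspose.mulVec (A.mulVec b)) = inr (A.mulVec v) (A.mulVec b) :=
      (inr_adj A v (A.mulVec b)).symm
    have h4 : Complex.re (inr v Db) = n2sq v := by rw [h1]; simp
    rw [← h4, h2, h3]
    simp [Complex.sub_re]
  have hsupp : SparseSet N r M s6 (supp v ∪ supp b) :=
    sparse_subset (Finset.union_subset_union (supp_proj_subset W Db) (le_refl _)) h
  have hb := re_polar hR hδ hsupp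
  rw [← hkey] at hb
  by_cases hv0 : n2 v = 0
  · rw [hv0]
    exact mul_nonneg hδ (n2_nonneg b)
  · have hv' : 0 < n2 v := lt_of_le_of_ne (n2_nonneg v) (Ne.symm hv0)
    have : n2 v ^ 2 ≤ δ * (n2 v * n2 b) := by rw [n2_sq]; exact hb
    nlinarith

/-- Lemma B: `‖P_W A* v‖ ≤ √(1+δ) ‖v‖` for `W` sparse. -/
lemma proj_adjoint (hR : RIPBound A r M s6 δ) (hδ : 0 ≤ δ) (v : Fin m → ℂ)
    {W : Finset (Fin N)} (h : SparseSet N r M s6 W) :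
    n2 (proj W (A.conjTranspose.mulVec v)) ≤ Real.sqrt (1 + δ) * n2 v := by
  set a : Fin N → ℂ := proj W (A.conjTranspose.mulVec v) with ha
  have hkey : (n2sq a : ℂ) = inr (A.mulVec a) v := by
    rw [inr_adj A a v]
    rw [ha]
    exact (inr_proj_self W (A.conjTranspose.mulVec v)).symm
  have hsp : Sparse r M s6 a := sparse_subset (supp_proj_subset _ _) h
  have h1 : n2sq a ≤ n2 (A.mulVec a) * n2 v := by
    have h2 : ‖inr (A.mulVec a) v‖ ≤ n2 (A.mulVec a) * n2 v := norm_inr_le _ _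
    calc n2sq a = ‖(n2sq a : ℂ)‖ := by
          rw [Complex.norm_real]; exact (abs_of_nonneg (n2sq_nonneg a)).symm
      _ = ‖inr (A.mulVec a) v‖ := by rw [hkey]
      _ ≤ _ := h2
  have h3 := normAz_le hR hδ hsp
  by_cases ha0 : n2 a = 0
  · rw [ha0]
    exact mul_nonneg (Real.sqrt_nonneg _) (n2_nonneg v)
  · have ha' : 0 < n2 a := lt_of_le_of_ne (n2_nonneg a) (Ne.symm ha0)
    have h4 : n2 a ^ 2 ≤ n2 (A.mulVec a) * n2 v := by rw [n2_sq]; exact h1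
    nlinarith [n2_nonneg (A.mulVec a), n2_nonneg v, Real.sqrt_nonneg (1 + δ),
      mul_le_mul_of_nonneg_right h3 (n2_nonneg v)]
end RIP2

-- Part F: thresholding
section Thresh
variable {N r : ℕ} {M : ℕ → ℕ}

lemma sum_inter_levels (hM : LevelsOK N r M) (D : Finset (Fin N)) (g : Fin N → ℝ) :
    ∑ i ∈ D, g i = ∑ k ∈ Finset.range r, ∑ i ∈ D ∩ level N M k, g i := by
  have hD : D = (Finset.range r).biUnion (fun k => D ∩ level N M k) := by
    ext i
    simp only [Finset.mem_biUnion, Finset.mem_range, Finset.mem_inter]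
    constructor
    · intro hi
      obtain ⟨k, hk, hik⟩ := exists_level hM i
      exact ⟨k, hk, hi, hik⟩
    · rintro ⟨k, _, hi, _⟩; exact hi
  rw [← Finset.sum_biUnion, ← hD]
  intro k hk l hl hne
  exact Finset.disjoint_of_subset_left Finset.inter_subset_right
    (Finset.disjoint_of_subset_right Finset.inter_subset_right
      (level_disjoint hM (Finset.mem_range.mp hk) (Finset.mem_range.mp hl) hne))

lemma sum_sq_levels_le (hM : LevelsOK N r M) (u : Fin N → ℂ) (D1 D2 : Finset (Fin N))
    (hcard : ∀ k < r, (D1 ∩ level N M k).card ≤ (D2 ∩ level N M k).card)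
    (hcmp : ∀ k < r, ∀ i ∈ D1 ∩ level N M k, ∀ j ∈ D2 ∩ level N M k, ‖u i‖ ≤ ‖u j‖) :
    ∑ i ∈ D1, ‖u i‖ ^ 2 ≤ ∑ i ∈ D2, ‖u i‖ ^ 2 := by
  rw [sum_inter_levels hM D1 _, sum_inter_levels hM D2 _]
  apply Finset.sum_le_sum
  intro k hk
  rw [Finset.mem_range] at hk
  by_cases h1 : (D1 ∩ level N M k).Nonempty
  · have h2 : (D2 ∩ level N M k).Nonempty := by
      rw [← Finset.card_pos] at h1 ⊢
      exact lt_of_lt_of_le h1 (hcard k hk)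
    obtain ⟨j0, hj0, hj0min⟩ := Finset.exists_min_image (D2 ∩ level N M k) (fun j => ‖u j‖) h2
    calc ∑ i ∈ D1 ∩ level N M k, ‖u i‖ ^ 2
        ≤ ∑ _i ∈ D1 ∩ level N M k, ‖u j0‖ ^ 2 := by
          apply Finset.sum_le_sum
          intro i hi
          exact pow_le_pow_left₀ (norm_nonneg _) (hcmp k hk i hi j0 hj0) 2
      _ = (D1 ∩ level N M k).card * ‖u j0‖ ^ 2 := by
          rw [Finset.sum_const, nsmul_eq_mul]
      _ ≤ (D2 ∩ level N M k).card * ‖u j0‖ ^ 2 := by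
          apply mul_le_mul_of_nonneg_right _ (by positivity)
          exact_mod_cast hcard k hk
      _ = ∑ _i ∈ D2 ∩ level N M k, ‖u j0‖ ^ 2 := by
          rw [Finset.sum_const, nsmul_eq_mul]
      _ ≤ ∑ i ∈ D2 ∩ level N M k, ‖u i‖ ^ 2 := by
          apply Finset.sum_le_sum
          intro i hi
          exact pow_le_pow_left₀ (norm_nonneg _) (hj0min i hi) 2
  · rw [Finset.not_nonempty_iff_eq_empty] at h1
    rw [h1, Finset.sum_empty]
    exact Finset.sum_nonneg fun i _ => by positivity

lemma proj_univ (x : Fin N → ℂ) : proj Finset.univ x = x := by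
  funext i; simp [proj]

lemma proj_split {T T' : Finset (Fin N)} (h : T ⊆ T') (x : Fin N → ℂ) :
    proj T' x = proj T x + proj (T' \ T) x := by
  funext i
  simp only [Pi.add_apply, proj]
  by_cases h1 : i ∈ T
  · simp [h1, h h1, Finset.mem_sdiff]
  · by_cases h2 : i ∈ T'
    · simp [h1, h2, Finset.mem_sdiff]
    · simp [h1, h2, Finset.mem_sdiff]

lemma wn1_proj (w : Fin N → ℝ) (D : Finset (Fin N)) (x : Fin N → ℂ) :
    wn1 w (proj D x) = ∑ i ∈ D, w i * ‖x i‖ := by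
  unfold wn1
  rw [← Finset.sum_filter_add_sum_filter_not Finset.univ (· ∈ D)]
  have h1 : ∑ i ∈ Finset.univ.filter (· ∈ D), w i * ‖proj D x i‖ = ∑ i ∈ D, w i * ‖x i‖ := by
    rw [Finset.filter_mem_eq_inter, Finset.univ_inter]
    exact Finset.sum_congr rfl fun i hi => by rw [proj_apply_mem hi]
  have h2 : ∑ i ∈ Finset.univ.filter (¬ · ∈ D), w i * ‖proj D x i‖ = 0 :=
    Finset.sum_eq_zero fun i hi => by
      rw [proj_apply_not_mem (Finset.mem_filter.mp hi).2]; simp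
  rw [h1, h2, add_zero]

/-- The key thresholding estimate: `‖f - H(u)‖₂² ≤ 3 ‖(u - f)_{S ∪ T₁}‖₂²`. -/
lemma thresh_sq (hM : LevelsOK N r M) (u f : Fin N → ℂ) (S T1 : Finset (Fin N)) (s2 : ℕ → ℕ)
    (hS : ∀ k < r, (S ∩ level N M k).card = min (s2 k) (level N M k).card)
    (hT1 : IsTopSet r M s2 u T1) (hf : supp f ⊆ S) :
    n2sq (f - proj T1 u) ≤ 3 * n2sq (proj (S ∪ T1) (u - f)) := by
  classical
  set d : Fin N → ℂ := u - f with hd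
  have hfzero : ∀ i, i ∉ S → f i = 0 := by
    intro i hi
    by_contra h
    exact hi (hf (mem_supp.mpr h))
  -- LHS splitting
  have hsplit : n2sq (f - proj T1 u)
      = ∑ i ∈ T1, ‖d i‖ ^ 2 + ∑ i ∈ S \ T1, ‖f i‖ ^ 2 := by
    unfold n2sq
    rw [← Finset.sum_filter_add_sum_filter_not Finset.univ (· ∈ T1)]
    congr 1
    · rw [Finset.filter_mem_eq_inter, Finset.univ_inter]
      apply Finset.sum_congr rfl
      intro i hi
      have h2 : (f - proj T1 u) i = -(d i) := by
        have h3 : d i = u i - f i := rfl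
        rw [Pi.sub_apply, proj_apply_mem hi, h3]; ring
      rw [h2, norm_neg]
    · have hsub : S \ T1 ⊆ Finset.univ.filter (¬ · ∈ T1) := by
        intro i hi
        simp only [Finset.mem_filter, Finset.mem_univ, true_and]
        exact (Finset.mem_sdiff.mp hi).2
      have hzero : ∀ i ∈ Finset.univ.filter (¬ · ∈ T1), i ∉ S \ T1 →
          ‖f i - proj T1 u i‖ ^ 2 = 0 := by
        intro i hi hni
        simp only [Finset.mem_filter, Finset.mem_univ, true_and] at hi
        have hiS : i ∉ S := by
          intro h
          exact hni (Finset.mem_sdiff.mpr ⟨h, hi⟩)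
        rw [proj_apply_not_mem hi, hfzero i hiS]
        simp
      simp only [Pi.sub_apply] at hzero ⊢
      rw [← Finset.sum_subset hsub hzero]
      apply Finset.sum_congr rfl
      intro i hi
      rw [proj_apply_not_mem (Finset.mem_sdiff.mp hi).2]
      simp
  -- compare off-support u-masses
  have hcomp : ∑ i ∈ S \ T1, ‖u i‖ ^ 2 ≤ ∑ i ∈ T1 \ S, ‖u i‖ ^ 2 := by
    apply sum_sq_levels_le hM u _ _
    · intro k hk
      have e1 : (S \ T1) ∩ level N M k = (S ∩ level N M k) \ (T1 ∩ level N M k) := by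
        ext i; simp only [Finset.mem_sdiff, Finset.mem_inter]; tauto
      have e2 : (T1 \ S) ∩ level N M k = (T1 ∩ level N M k) \ (S ∩ level N M k) := by
        ext i; simp only [Finset.mem_sdiff, Finset.mem_inter]; tauto
      have c1 := Finset.card_sdiff_add_card_inter (S ∩ level N M k) (T1 ∩ level N M k)
      have c2 := Finset.card_sdiff_add_card_inter (T1 ∩ level N M k) (S ∩ level N M k)
      have c3 : (S ∩ level N M k).card = (T1 ∩ level N M k).card := by
        rw [hS k hk, hT1.1 k hk]
      have c4 : ((S ∩ level N M k) ∩ (T1 ∩ level N M k)).card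
          = ((T1 ∩ level N M k) ∩ (S ∩ level N M k)).card := by
        rw [Finset.inter_comm]
      rw [e1, e2]
      omega
    · intro k hk i hi j hj
      rw [Finset.mem_inter, Finset.mem_sdiff] at hi hj
      exact hT1.2 k hk j (Finset.mem_inter.mpr ⟨hj.1.1, hj.2⟩)
        i (Finset.mem_sdiff.mpr ⟨hi.2, hi.1.2⟩)
  -- convert u to d off S
  have hTS : ∑ i ∈ T1 \ S, ‖u i‖ ^ 2 = ∑ i ∈ T1 \ S, ‖d i‖ ^ 2 := by
    apply Finset.sum_congr rfl
    intro i hi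
    rw [hd, Pi.sub_apply, hfzero i (Finset.mem_sdiff.mp hi).2, sub_zero]
  -- bound the f part
  have hfpart : ∑ i ∈ S \ T1, ‖f i‖ ^ 2
      ≤ 2 * ∑ i ∈ S \ T1, ‖d i‖ ^ 2 + 2 * ∑ i ∈ S \ T1, ‖u i‖ ^ 2 := by
    rw [Finset.mul_sum, Finset.mul_sum, ← Finset.sum_add_distrib]
    apply Finset.sum_le_sum
    intro i _
    have h1 : ‖f i‖ ≤ ‖u i‖ + ‖d i‖ := by
      have h2 : f i = u i - d i := by rw [hd, Pi.sub_apply]; ring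
      rw [h2]
      exact norm_sub_le _ _
    have h2 : ‖f i‖ ^ 2 ≤ (‖u i‖ + ‖d i‖) ^ 2 := pow_le_pow_left₀ (norm_nonneg _) h1 2
    nlinarith [sq_nonneg (‖u i‖ - ‖d i‖)]
  -- RHS splitting
  have hRHS : n2sq (proj (S ∪ T1) d) = ∑ i ∈ T1, ‖d i‖ ^ 2 + ∑ i ∈ S \ T1, ‖d i‖ ^ 2 := by
    rw [n2sq_proj]
    have : S ∪ T1 = T1 ∪ (S \ T1) := by
      ext i; simp only [Finset.mem_union, Finset.mem_sdiff]; tauto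
    rw [this, Finset.sum_union]
    rw [Finset.disjoint_left]
    intro i hi hi'
    exact (Finset.mem_sdiff.mp hi').2 hi
  have hT1S_le : ∑ i ∈ T1 \ S, ‖d i‖ ^ 2 ≤ ∑ i ∈ T1, ‖d i‖ ^ 2 :=
    Finset.sum_le_sum_of_subset_of_nonneg (Finset.sdiff_subset) (fun i _ _ => by positivity)
  have hd2 : (0:ℝ) ≤ ∑ i ∈ S \ T1, ‖d i‖ ^ 2 := Finset.sum_nonneg fun i _ => by positivity
  rw [hsplit, hRHS]
  rw [hTS] at hcomp
  linarith [hfpart, hcomp, hT1S_le]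
end Thresh

-- Part G: assembly helpers
section Helpers
variable {N r : ℕ} {M : ℕ → ℕ}

lemma proj_add (Δ : Finset (Fin N)) (p q : Fin N → ℂ) :
    proj Δ (p + q) = proj Δ p + proj Δ q := by
  funext i
  by_cases hi : i ∈ Δ <;> simp [proj, hi]

lemma n2_neg (v : Fin N → ℂ) : n2 (-v) = n2 v := by
  unfold n2; rw [n2sq_neg]

lemma n2_sub_rev (p q : Fin N → ℂ) : n2 (p - q) = n2 (q - p) := by
  rw [← n2_neg (q - p), neg_sub]

lemma wn1_add_le {w : Fin N → ℝ} (hw : ∀ i, 0 ≤ w i) (p q : Fin N → ℂ) :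
    wn1 w (p + q) ≤ wn1 w p + wn1 w q := by
  unfold wn1
  rw [← Finset.sum_add_distrib]
  apply Finset.sum_le_sum
  intro i _
  rw [← mul_add]
  exact mul_le_mul_of_nonneg_left (norm_add_le _ _) (hw i)

lemma wn1_sum_superset {w : Fin N → ℝ} {v : Fin N → ℂ} {U : Finset (Fin N)}
    (hv : supp v ⊆ U) : wn1 w v = ∑ i ∈ U, w i * ‖v i‖ := by
  unfold wn1
  rw [← Finset.sum_subset (Finset.subset_univ U)]
  intro i _ hi
  have : v i = 0 := by
    by_contra h
    exact hi (hv (mem_supp.mpr h))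
  rw [this]; simp

lemma sum_sq_le_sq_sum {α : Type*} (F : Finset α) (a : α → ℝ) (ha : ∀ i ∈ F, 0 ≤ a i) :
    ∑ i ∈ F, (a i) ^ 2 ≤ (∑ i ∈ F, a i) ^ 2 := by
  have h1 : ∀ i ∈ F, a i ^ 2 ≤ a i * ∑ j ∈ F, a j := by
    intro i hi
    rw [sq]
    exact mul_le_mul_of_nonneg_left (Finset.single_le_sum ha hi) (ha i hi)
  calc ∑ i ∈ F, (a i) ^ 2 ≤ ∑ i ∈ F, a i * ∑ j ∈ F, a j := Finset.sum_le_sum h1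
    _ = (∑ i ∈ F, a i) ^ 2 := by rw [← Finset.sum_mul, sq]

lemma sub_proj_eq (T : Finset (Fin N)) (x : Fin N → ℂ) :
    x - proj T x = proj (Finset.univ \ T) x := by
  have h := proj_split (Finset.subset_univ T) x
  rw [proj_univ] at h
  rw [sub_eq_iff_eq_add']; exact h

lemma sum_g_levels_le (hM : LevelsOK N r M) (g : Fin N → ℝ) (hg : ∀ i, 0 ≤ g i)
    (D1 D2 : Finset (Fin N))
    (hcard : ∀ k < r, (D1 ∩ level N M k).card ≤ (D2 ∩ level N M k).card)
    (hcmp : ∀ k < r, ∀ i ∈ D1 ∩ level N M k, ∀ j ∈ D2 ∩ level N M k, g i ≤ g j) :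
    ∑ i ∈ D1, g i ≤ ∑ i ∈ D2, g i := by
  rw [sum_inter_levels hM D1 _, sum_inter_levels hM D2 _]
  apply Finset.sum_le_sum
  intro k hk
  rw [Finset.mem_range] at hk
  by_cases h1 : (D1 ∩ level N M k).Nonempty
  · have h2 : (D2 ∩ level N M k).Nonempty := by
      rw [← Finset.card_pos] at h1 ⊢
      exact lt_of_lt_of_le h1 (hcard k hk)
    obtain ⟨j0, hj0, hj0min⟩ := Finset.exists_min_image (D2 ∩ level N M k) g h2
    calc ∑ i ∈ D1 ∩ level N M k, g i
        ≤ ∑ _i ∈ D1 ∩ level N M k, g j0 :=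
          Finset.sum_le_sum fun i hi => hcmp k hk i hi j0 hj0
      _ = (D1 ∩ level N M k).card * g j0 := by rw [Finset.sum_const, nsmul_eq_mul]
      _ ≤ (D2 ∩ level N M k).card * g j0 := by
          apply mul_le_mul_of_nonneg_right _ (hg j0)
          exact_mod_cast hcard k hk
      _ = ∑ _i ∈ D2 ∩ level N M k, g j0 := by rw [Finset.sum_const, nsmul_eq_mul]
      _ ≤ ∑ i ∈ D2 ∩ level N M k, g i := Finset.sum_le_sum fun i hi => hj0min i hi
  · rw [Finset.not_nonempty_iff_eq_empty] at h1
    rw [h1, Finset.sum_empty]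
    exact Finset.sum_nonneg fun i _ => hg i

end Helpers

-- Part H: bestApprox bound and weighted CS
section H
variable {N r : ℕ} {M s : ℕ → ℕ}

lemma sparse_zero : Sparse r M s (0 : Fin N → ℂ) := by
  intro k hk
  have : supp (0 : Fin N → ℂ) = ∅ := by
    apply Finset.eq_empty_of_forall_notMem
    intro i hi
    exact (mem_supp.mp hi) rfl
  rw [this]
  simp

lemma best_lb (hM : LevelsOK N r M) {w : Fin N → ℝ} {wl : ℕ → ℝ}
    (hwpos : ∀ k < r, 0 < wl k) (hw : ∀ k < r, ∀ i ∈ level N M k, w i = wl k)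
    (x : Fin N → ℂ) (T : Finset (Fin N))
    (hTcard : ∀ k < r, (T ∩ level N M k).card = min (s k) (level N M k).card)
    (hTcmp : ∀ k < r, ∀ i ∈ T ∩ level N M k, ∀ j ∈ level N M k \ T, ‖x j‖ ≤ ‖x i‖) :
    wn1 w (x - proj T x) ≤ bestApprox r M s w x := by
  have hwnn : ∀ i : Fin N, 0 ≤ w i := by
    intro i
    obtain ⟨k, hk, hik⟩ := exists_level hM i
    rw [hw k hk i hik]
    exact le_of_lt (hwpos k hk)
  apply le_csInf
  · exact ⟨wn1 w (x - 0), 0, sparse_zero, rfl⟩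
  · rintro t ⟨z, hz, rfl⟩
    set Z := supp z with hZ
    set g : Fin N → ℝ := fun i => w i * ‖x i‖ with hg
    have hgnn : ∀ i, 0 ≤ g i := fun i => mul_nonneg (hwnn i) (norm_nonneg _)
    -- step 1 : wn1 w (x - proj T x) = ∑_{univ \ T} g
    have e1 : wn1 w (x - proj T x) = ∑ i ∈ Finset.univ \ T, g i := by
      rw [sub_proj_eq, wn1_proj]
    -- step 2 : ∑_{univ \ T} g ≤ ∑_{univ \ Z} g, i.e. ∑_Z g ≤ ∑_T g
    have e2 : ∑ i ∈ Finset.univ \ T, g i ≤ ∑ i ∈ Finset.univ \ Z, g i := by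
      have hZT : ∑ i ∈ Z, g i ≤ ∑ i ∈ T, g i := by
        have hsplitZ : ∑ i ∈ Z, g i = ∑ i ∈ Z ∩ T, g i + ∑ i ∈ Z \ T, g i := by
          rw [Finset.sum_inter_add_sum_sdiff]
        have hsplitT : ∑ i ∈ T, g i = ∑ i ∈ T ∩ Z, g i + ∑ i ∈ T \ Z, g i := by
          rw [Finset.sum_inter_add_sum_sdiff]
        have hkey : ∑ i ∈ Z \ T, g i ≤ ∑ i ∈ T \ Z, g i := by
          apply sum_g_levels_le hM g hgnn
          · intro k hk
            have e3 : (Z \ T) ∩ level N M k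
                = (Z ∩ level N M k) \ (T ∩ level N M k) := by
              ext i; simp only [Finset.mem_sdiff, Finset.mem_inter]; tauto
            have e4 : (T \ Z) ∩ level N M k
                = (T ∩ level N M k) \ (Z ∩ level N M k) := by
              ext i; simp only [Finset.mem_sdiff, Finset.mem_inter]; tauto
            have c1 := Finset.card_sdiff_add_card_inter (Z ∩ level N M k) (T ∩ level N M k)
            have c2 := Finset.card_sdiff_add_card_inter (T ∩ level N M k) (Z ∩ level N M k)
            have c4 : ((Z ∩ level N M k) ∩ (T ∩ level N M k)).card
                = ((T ∩ level N M k) ∩ (Z ∩ level N M k)).card := by rw [Finset.inter_comm]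
            have c5 : (Z ∩ level N M k).card ≤ s k := hz k hk
            have c6 : (Z ∩ level N M k).card ≤ (level N M k).card :=
              Finset.card_le_card Finset.inter_subset_right
            have c7 := hTcard k hk
            rw [e3, e4]
            omega
          · intro k hk i hi j hj
            rw [Finset.mem_inter, Finset.mem_sdiff] at hi hj
            have hcmp := hTcmp k hk j (Finset.mem_inter.mpr ⟨hj.1.1, hj.2⟩) i
              (Finset.mem_sdiff.mpr ⟨hi.2, hi.1.2⟩)
            rw [hg]
            simp only
            rw [hw k hk i hi.2, hw k hk j hj.2]
            exact mul_le_mul_of_nonneg_left hcmp (le_of_lt (hwpos k hk))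
        have hcomm : ∑ i ∈ Z ∩ T, g i = ∑ i ∈ T ∩ Z, g i := by rw [Finset.inter_comm]
        linarith [hsplitZ, hsplitT, hkey, hcomm]
      have hsd : ∀ D : Finset (Fin N), ∑ i ∈ Finset.univ \ D, g i
          = ∑ i ∈ Finset.univ, g i - ∑ i ∈ D, g i := by
        intro D
        rw [eq_sub_iff_add_eq, Finset.sum_sdiff_eq_sub (Finset.subset_univ D)]
        ring
      rw [hsd T, hsd Z]
      linarith
    -- step 3 : ∑_{univ \ Z} g ≤ wn1 w (x - z)
    have e3 : ∑ i ∈ Finset.univ \ Z, g i ≤ wn1 w (x - z) := by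
      unfold wn1
      rw [← Finset.sum_sdiff (Finset.subset_univ Z)]
      have h1 : ∑ i ∈ Finset.univ \ Z, g i = ∑ i ∈ Finset.univ \ Z, w i * ‖(x - z) i‖ := by
        apply Finset.sum_congr rfl
        intro i hi
        have hzi : z i = 0 := by
          by_contra h
          exact (Finset.mem_sdiff.mp hi).2 (mem_supp.mpr h)
        rw [hg]
        simp only [Pi.sub_apply, hzi, sub_zero]
      rw [h1]
      have h2 : 0 ≤ ∑ i ∈ Z, w i * ‖(x - z) i‖ :=
        Finset.sum_nonneg fun i _ => mul_nonneg (hwnn i) (norm_nonneg _)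
      linarith
    calc wn1 w (x - proj T x) = ∑ i ∈ Finset.univ \ T, g i := e1
      _ ≤ ∑ i ∈ Finset.univ \ Z, g i := e2
      _ ≤ wn1 w (x - z) := e3

lemma wn1_le_sqrt_zeta (hM : LevelsOK N r M) {w : Fin N → ℝ} {wl : ℕ → ℝ}
    (hwpos : ∀ k < r, 0 < wl k) (hw : ∀ k < r, ∀ i ∈ level N M k, w i = wl k)
    (v : Fin N → ℂ) (U : Finset (Fin N)) (hU : supp v ⊆ U)
    (hUcard : ∀ k < r, (U ∩ level N M k).card ≤ 4 * s k) :
    wn1 w v ≤ 2 * Real.sqrt (zeta r s wl) * n2 v := by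
  have hwnn : ∀ i : Fin N, 0 ≤ w i := by
    intro i
    obtain ⟨k, hk, hik⟩ := exists_level hM i
    rw [hw k hk i hik]
    exact le_of_lt (hwpos k hk)
  have hζnn : 0 ≤ zeta r s wl :=
    Finset.sum_nonneg fun k _ => mul_nonneg (sq_nonneg _) (Nat.cast_nonneg _)
  have h1 : wn1 w v = ∑ i ∈ U, w i * ‖v i‖ := wn1_sum_superset hU
  have h2 : (∑ i ∈ U, w i * ‖v i‖) ^ 2 ≤ (∑ i ∈ U, w i ^ 2) * ∑ i ∈ U, ‖v i‖ ^ 2 :=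
    Finset.sum_mul_sq_le_sq_mul_sq U _ _
  have h3 : ∑ i ∈ U, w i ^ 2 ≤ 4 * zeta r s wl := by
    rw [sum_inter_levels hM U (fun i => w i ^ 2)]
    unfold zeta
    rw [Finset.mul_sum]
    apply Finset.sum_le_sum
    intro k hk
    rw [Finset.mem_range] at hk
    have h4 : ∑ i ∈ U ∩ level N M k, w i ^ 2 = (U ∩ level N M k).card * wl k ^ 2 := by
      rw [Finset.sum_congr rfl (fun i hi => by
        rw [hw k hk i (Finset.mem_inter.mp hi).2]), Finset.sum_const, nsmul_eq_mul]
    rw [h4]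
    have h5 : ((U ∩ level N M k).card : ℝ) ≤ 4 * s k := by exact_mod_cast hUcard k hk
    nlinarith [sq_nonneg (wl k)]
  have h6 : ∑ i ∈ U, ‖v i‖ ^ 2 ≤ n2sq v := by
    unfold n2sq
    exact Finset.sum_le_sum_of_subset_of_nonneg (Finset.subset_univ U) fun i _ _ => by positivity
  have h7 : (wn1 w v) ^ 2 ≤ 4 * zeta r s wl * n2sq v := by
    rw [h1]
    calc (∑ i ∈ U, w i * ‖v i‖) ^ 2 ≤ (∑ i ∈ U, w i ^ 2) * ∑ i ∈ U, ‖v i‖ ^ 2 := h2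
      _ ≤ 4 * zeta r s wl * n2sq v := by
          apply mul_le_mul h3 h6 (Finset.sum_nonneg fun i _ => by positivity) (by linarith)
  have h8 : 0 ≤ wn1 w v := wn1_nonneg hwnn v
  have h9 : wn1 w v ≤ Real.sqrt (4 * zeta r s wl * n2sq v) := by
    rw [show wn1 w v = Real.sqrt ((wn1 w v) ^ 2) from (Real.sqrt_sq h8).symm]
    exact Real.sqrt_le_sqrt h7
  calc wn1 w v ≤ Real.sqrt (4 * zeta r s wl * n2sq v) := h9
    _ = 2 * Real.sqrt (zeta r s wl) * n2 v := by
        rw [Real.sqrt_mul (by positivity), Real.sqrt_mul (by norm_num : (0:ℝ) ≤ 4)]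
        rw [show Real.sqrt 4 = 2 by
          rw [show (4:ℝ) = 2^2 by norm_num, Real.sqrt_sq (by norm_num : (0:ℝ) ≤ 2)]]
        rfl
end H

-- Part I: tail package
section I
variable {N r : ℕ} {M s : ℕ → ℕ}

lemma tail_package (hM : LevelsOK N r M) (hr : 0 < r) (hs : ∀ k < r, 1 ≤ s k)
    {w : Fin N → ℝ} {wl : ℕ → ℝ}
    (hwpos : ∀ k < r, 0 < wl k) (hw : ∀ k < r, ∀ i ∈ level N M k, w i = wl k)
    (x : Fin N → ℂ) :
    ∃ (T S : Finset (Fin N)) (J : ℕ) (z : ℕ → Fin N → ℂ),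
      T ⊆ S ∧
      (∀ k < r, (T ∩ level N M k).card = min (s k) (level N M k).card) ∧
      (∀ k < r, ∀ i ∈ T ∩ level N M k, ∀ j ∈ level N M k \ T, ‖x j‖ ≤ ‖x i‖) ∧
      (∀ k < r, (S ∩ level N M k).card = min (2 * s k) (level N M k).card) ∧
      x - proj S x = ∑ j ∈ Finset.range J, z j ∧
      (∀ j, ∀ k < r, (supp (z j) ∩ level N M k).card ≤ s k) ∧
      (∑ j ∈ Finset.range J, n2 (z j))
        ≤ wn1 w (x - proj T x) / Real.sqrt (xiMin r s wl) := by
  classical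
  have hwnn : ∀ i : Fin N, 0 ≤ w i := by
    intro i
    obtain ⟨k, hk, hik⟩ := exists_level hM i
    rw [hw k hk i hik]
    exact le_of_lt (hwpos k hk)
  have hξpos : 0 < xiMin r s wl := by
    rw [xiMin, dif_pos (Finset.nonempty_range_iff.mpr (by omega : r ≠ 0))]
    rw [Finset.lt_inf'_iff]
    intro k hk
    rw [Finset.mem_range] at hk
    have := hs k hk
    have := hwpos k hk
    positivity
  have hξle : ∀ k < r, xiMin r s wl ≤ wl k ^ 2 * s k := by
    intro k hk
    rw [xiMin, dif_pos (Finset.nonempty_range_iff.mpr (by omega : r ≠ 0))]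
    exact Finset.inf'_le _ (Finset.mem_range.mpr hk)
  obtain ⟨W, hW0, hWsub, hWtop⟩ := exists_chain hM s x
  have hWcard : ∀ j, ∀ k, k < r →
      (W j ∩ level N M k).card = min (j * s k) (level N M k).card :=
    fun j k hk => (hWtop j).1 k hk
  have hWcmp : ∀ j, ∀ k, k < r → ∀ i ∈ W j ∩ level N M k,
      ∀ l ∈ level N M k \ W j, ‖x l‖ ≤ ‖x i‖ :=
    fun j k hk => (hWtop j).2 k hk
  have hWmono : ∀ i j, i ≤ j → W i ⊆ W j := by
    intro i j hij
    induction j with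
    | zero => obtain rfl := Nat.le_zero.mp hij; exact subset_rfl
    | succ j ih =>
        rcases Nat.eq_or_lt_of_le hij with h | h
        · exact h ▸ subset_rfl
        · exact subset_trans (ih (by omega)) (hWsub j)
  have hLN : ∀ k, (level N M k).card ≤ N := by
    intro k
    calc (level N M k).card ≤ (Finset.univ : Finset (Fin N)).card := Finset.card_le_univ _
      _ = N := by rw [Finset.card_univ, Fintype.card_fin]
  have hWuniv : W (N + 2) = Finset.univ := by
    apply Finset.eq_univ_of_forall
    intro i
    obtain ⟨k, hk, hik⟩ := exists_level hM i
    have h1 : (W (N+2) ∩ level N M k).card = (level N M k).card := by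
      rw [hWcard (N+2) k hk]
      have := hLN k
      have := hs k hk
      have : (N+2) * s k ≥ N + 2 := Nat.le_mul_of_pos_right _ (hs k hk)
      omega
    have h2 : W (N+2) ∩ level N M k = level N M k :=
      Finset.eq_of_subset_of_card_le Finset.inter_subset_right (le_of_eq h1.symm)
    have h3 : i ∈ W (N+2) ∩ level N M k := h2.symm ▸ hik
    exact (Finset.mem_inter.mp h3).1
  set B : ℕ → Finset (Fin N) := fun j => W (j+1) \ W j with hB
  set z : ℕ → Fin N → ℂ := fun j => proj (B (j+2)) x with hz
  set T := W 1 with hT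
  set S := W 2 with hS
  -- block cards
  have hBcard : ∀ j, ∀ k, k < r → ((B j) ∩ level N M k).card ≤ s k := by
    intro j k hk
    have e1 : (B j) ∩ level N M k
        = (W (j+1) ∩ level N M k) \ (W j ∩ level N M k) := by
      ext i; simp only [hB, Finset.mem_sdiff, Finset.mem_inter]; tauto
    have hsub : (W j ∩ level N M k) ⊆ (W (j+1) ∩ level N M k) :=
      Finset.inter_subset_inter (hWsub j) subset_rfl
    rw [e1, Finset.card_sdiff_of_subset hsub, hWcard (j+1) k hk, hWcard j k hk]
    have h3 : min (j * s k) (level N M k).card ≤ min ((j+1) * s k) (level N M k).card := by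
      have : j * s k ≤ (j+1) * s k := Nat.mul_le_mul_right _ (by omega)
      omega
    have h4 : (j+1) * s k = j * s k + s k := by ring
    omega
  -- telescoping
  have htel : ∀ n : ℕ, proj (W (2+n)) x = proj S x + ∑ j ∈ Finset.range n, z j := by
    intro n
    induction n with
    | zero => simp [hS]
    | succ n ih =>
        have h1 : proj (W (2+n+1)) x = proj (W (2+n)) x + proj (B (2+n)) x := by
          rw [proj_split (hWsub (2+n)) x]
        have h2 : B (n+2) = B (2+n) := by rw [Nat.add_comm]
        rw [show 2+(n+1) = 2+n+1 from rfl, h1, ih, Finset.sum_range_succ]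
        rw [add_assoc]
        congr 1
        rw [hz]
        simp only
        rw [h2]
  have hdecomp : x - proj S x = ∑ j ∈ Finset.range N, z j := by
    have h1 := htel N
    rw [show 2 + N = N + 2 from by ring, hWuniv, proj_univ] at h1
    rw [sub_eq_iff_eq_add']
    exact h1
  -- block estimate
  have hblock : ∀ p : ℕ, n2 (proj (B (p+1)) x)
      ≤ wn1 w (proj (B p) x) / Real.sqrt (xiMin r s wl) := by
    intro p
    set Q := B (p+1) with hQ
    set P := B p with hP
    have hQlvl : ∀ k, k < r → (Q ∩ level N M k).Nonempty →
        (P ∩ level N M k).card = s k ∧ (Q ∩ level N M k).card ≤ s k := by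
      intro k hk hQne
      obtain ⟨i, hi⟩ := hQne
      rw [Finset.mem_inter] at hi
      have hiW : i ∉ W (p+1) := (Finset.mem_sdiff.mp hi.1).2
      have hnotall : (W (p+1) ∩ level N M k).card < (level N M k).card := by
        apply Finset.card_lt_card
        rw [Finset.ssubset_iff_of_subset Finset.inter_subset_right]
        exact ⟨i, hi.2, fun h => hiW (Finset.mem_inter.mp h).1⟩
      rw [hWcard (p+1) k hk] at hnotall
      have hps : (p+1) * s k < (level N M k).card := by omega
      have hPcard : (P ∩ level N M k).card = s k := by
        have e1 : P ∩ level N M k = (W (p+1) ∩ level N M k) \ (W p ∩ level N M k) := by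
          ext i'; simp only [hP, hB, Finset.mem_sdiff, Finset.mem_inter]; tauto
        rw [e1, Finset.card_sdiff_of_subset (Finset.inter_subset_inter (hWsub p) subset_rfl)]
        rw [hWcard (p+1) k hk, hWcard p k hk]
        have h2 : p * s k ≤ (p+1) * s k := Nat.mul_le_mul_right _ (by omega)
        have h3 : (p+1) * s k = p * s k + s k := by ring
        omega
      exact ⟨hPcard, hBcard (p+1) k hk⟩
    -- pointwise comparison
    have hPQ : ∀ k, k < r → ∀ i ∈ Q ∩ level N M k, ∀ i' ∈ P ∩ level N M k, ‖x i‖ ≤ ‖x i'‖ := by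
      intro k hk i hi i' hi'
      rw [Finset.mem_inter] at hi hi'
      apply hWcmp (p+1) k hk i'
      · exact Finset.mem_inter.mpr ⟨(Finset.mem_sdiff.mp hi'.1).1, hi'.2⟩
      · rw [Finset.mem_sdiff]
        exact ⟨hi.2, (Finset.mem_sdiff.mp hi.1).2⟩
    -- per-level estimate
    have hperlvl : ∀ k, k < r → ∑ i ∈ Q ∩ level N M k, ‖x i‖ ^ 2
        ≤ (∑ i ∈ P ∩ level N M k, w i * ‖x i‖) ^ 2 / xiMin r s wl := by
      intro k hk
      by_cases hQk : (Q ∩ level N M k).Nonempty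
      · obtain ⟨hPcard, hQcard⟩ := hQlvl k hk hQk
        set S1 : ℝ := ∑ i ∈ P ∩ level N M k, ‖x i‖ with hS1
        have hS1nn : 0 ≤ S1 := Finset.sum_nonneg fun i _ => norm_nonneg _
        have hskpos : (0:ℝ) < s k := by exact_mod_cast (hs k hk)
        have hbd : ∀ i ∈ Q ∩ level N M k, ‖x i‖ ≤ S1 / s k := by
          intro i hi
          rw [le_div_iff₀ hskpos]
          calc ‖x i‖ * s k = ∑ _i' ∈ P ∩ level N M k, ‖x i‖ := by
                rw [Finset.sum_const, nsmul_eq_mul, hPcard]; ring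
            _ ≤ S1 := Finset.sum_le_sum fun i' hi' => hPQ k hk i hi i' hi'
        have h1 : ∑ i ∈ Q ∩ level N M k, ‖x i‖ ^ 2 ≤ s k * (S1 / s k) ^ 2 := by
          calc ∑ i ∈ Q ∩ level N M k, ‖x i‖ ^ 2
              ≤ ∑ _i ∈ Q ∩ level N M k, (S1 / s k) ^ 2 := by
                apply Finset.sum_le_sum
                intro i hi
                exact pow_le_pow_left₀ (norm_nonneg _) (hbd i hi) 2
            _ = (Q ∩ level N M k).card * (S1 / s k) ^ 2 := by
                rw [Finset.sum_const, nsmul_eq_mul]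
            _ ≤ s k * (S1 / s k) ^ 2 := by
                apply mul_le_mul_of_nonneg_right _ (by positivity)
                exact_mod_cast hQcard
        have h2 : (s k : ℝ) * (S1 / s k) ^ 2 = S1 ^ 2 / s k := by
          field_simp
        have h3 : ∑ i ∈ P ∩ level N M k, w i * ‖x i‖ = wl k * S1 := by
          rw [hS1, Finset.mul_sum]
          apply Finset.sum_congr rfl
          intro i hi
          rw [hw k hk i (Finset.mem_inter.mp hi).2]
        have h4 : S1 ^ 2 / s k = (wl k * S1) ^ 2 / (wl k ^ 2 * s k) := by
          have hwlk := hwpos k hk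
          field_simp
        have h5 : (wl k * S1) ^ 2 / (wl k ^ 2 * s k) ≤ (wl k * S1) ^ 2 / xiMin r s wl := by
          apply div_le_div_of_nonneg_left (by positivity) hξpos (hξle k hk)
        rw [h3]
        calc ∑ i ∈ Q ∩ level N M k, ‖x i‖ ^ 2 ≤ s k * (S1 / s k) ^ 2 := h1
          _ = S1 ^ 2 / s k := h2
          _ = (wl k * S1) ^ 2 / (wl k ^ 2 * s k) := h4
          _ ≤ (wl k * S1) ^ 2 / xiMin r s wl := h5
      · rw [Finset.not_nonempty_iff_eq_empty] at hQk
        rw [hQk, Finset.sum_empty]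
        positivity
    -- sum the levels
    have hsq : n2sq (proj Q x) ≤ (wn1 w (proj P x)) ^ 2 / xiMin r s wl := by
      rw [n2sq_proj, sum_inter_levels hM Q (fun i => ‖x i‖ ^ 2)]
      have hwn1 : wn1 w (proj P x) = ∑ k ∈ Finset.range r,
          ∑ i ∈ P ∩ level N M k, w i * ‖x i‖ := by
        rw [wn1_proj, sum_inter_levels hM P (fun i => w i * ‖x i‖)]
      calc ∑ k ∈ Finset.range r, ∑ i ∈ Q ∩ level N M k, ‖x i‖ ^ 2
          ≤ ∑ k ∈ Finset.range r,
              (∑ i ∈ P ∩ level N M k, w i * ‖x i‖) ^ 2 / xiMin r s wl := by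
            apply Finset.sum_le_sum
            intro k hk
            exact hperlvl k (Finset.mem_range.mp hk)
        _ = (∑ k ∈ Finset.range r,
              (∑ i ∈ P ∩ level N M k, w i * ‖x i‖) ^ 2) / xiMin r s wl := by
            rw [Finset.sum_div]
        _ ≤ (∑ k ∈ Finset.range r,
              ∑ i ∈ P ∩ level N M k, w i * ‖x i‖) ^ 2 / xiMin r s wl := by
            apply (div_le_div_iff_of_pos_right hξpos).mpr
            apply sum_sq_le_sq_sum
            intro k _
            exact Finset.sum_nonneg fun i _ => mul_nonneg (hwnn i) (norm_nonneg _)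
        _ = (wn1 w (proj P x)) ^ 2 / xiMin r s wl := by rw [hwn1]
    have hwn1nn : 0 ≤ wn1 w (proj P x) := wn1_nonneg hwnn _
    calc n2 (proj Q x) = Real.sqrt (n2sq (proj Q x)) := rfl
      _ ≤ Real.sqrt ((wn1 w (proj P x)) ^ 2 / xiMin r s wl) := Real.sqrt_le_sqrt hsq
      _ = wn1 w (proj P x) / Real.sqrt (xiMin r s wl) := by
          rw [Real.sqrt_div (by positivity), Real.sqrt_sq hwn1nn]
  -- sum over blocks
  have hblocksum : ∑ j ∈ Finset.range N, wn1 w (proj (B (j+1)) x)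
      ≤ wn1 w (x - proj T x) := by
    have h1 : ∀ j, wn1 w (proj (B (j+1)) x) = ∑ i ∈ B (j+1), w i * ‖x i‖ :=
      fun j => wn1_proj w _ x
    have h2 : wn1 w (x - proj T x) = ∑ i ∈ Finset.univ \ T, w i * ‖x i‖ := by
      rw [sub_proj_eq, wn1_proj]
    rw [h2]
    calc ∑ j ∈ Finset.range N, wn1 w (proj (B (j+1)) x)
        = ∑ j ∈ Finset.range N, ∑ i ∈ B (j+1), w i * ‖x i‖ := by
          apply Finset.sum_congr rfl; intro j _; exact h1 j
      _ = ∑ i ∈ (Finset.range N).biUnion (fun j => B (j+1)), w i * ‖x i‖ := by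
          rw [Finset.sum_biUnion]
          have key : ∀ a b : ℕ, a < b → Disjoint (B (a+1)) (B (b+1)) := by
            intro a b hab
            rw [Finset.disjoint_left]
            intro i hi hi'
            have e1 : i ∈ W (a+1+1) := (Finset.mem_sdiff.mp hi).1
            have e2 : i ∉ W (b+1) := (Finset.mem_sdiff.mp hi').2
            exact e2 (hWmono (a+1+1) (b+1) (by omega) e1)
          intro j hj j' hj' hjj'
          show Disjoint (B (j+1)) (B (j'+1))
          rcases lt_or_gt_of_ne hjj' with h | h
          · exact key j j' h
          · exact (key j' j h).symm
      _ ≤ ∑ i ∈ Finset.univ \ T, w i * ‖x i‖ := by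
          apply Finset.sum_le_sum_of_subset_of_nonneg
          · intro i hi
            rw [Finset.mem_biUnion] at hi
            obtain ⟨j, _, hij⟩ := hi
            rw [Finset.mem_sdiff] at hij ⊢
            refine ⟨Finset.mem_univ i, fun hiT => ?_⟩
            exact hij.2 (hWmono 1 (j+1) (by omega) hiT)
          · intro i _ _
            exact mul_nonneg (hwnn i) (norm_nonneg _)
  refine ⟨T, S, N, z, hWmono 1 2 (by omega), ?_, ?_, ?_, hdecomp, ?_, ?_⟩
  · intro k hk
    have := hWcard 1 k hk
    rwa [one_mul] at this
  · exact fun k hk => hWcmp 1 k hk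
  · exact fun k hk => hWcard 2 k hk
  · intro j k hk
    exact le_trans (Finset.card_le_card
      (Finset.inter_subset_inter (supp_proj_subset _ _) (le_refl _))) (hBcard (j+2) k hk)
  · calc ∑ j ∈ Finset.range N, n2 (z j)
        ≤ ∑ j ∈ Finset.range N, wn1 w (proj (B (j+1)) x) / Real.sqrt (xiMin r s wl) := by
          apply Finset.sum_le_sum
          intro j _
          exact hblock (j+1)
      _ = (∑ j ∈ Finset.range N, wn1 w (proj (B (j+1)) x)) / Real.sqrt (xiMin r s wl) := by
          rw [Finset.sum_div]
      _ ≤ wn1 w (x - proj T x) / Real.sqrt (xiMin r s wl) := by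
          exact (div_le_div_iff_of_pos_right (Real.sqrt_pos.mpr hξpos)).mpr hblocksum
end I


set_option maxHeartbeats 1000000 in
/-- IHTL main theorem, weighted ℓ¹ bound: if `δ_{6s,M} < 1/√3`, there exist
`C, D > 0` depending only on `δ_{6s,M}` such that for all `x`, `e`, the IHTL sequence with
sparsities `(2s,M)`, `y = Ax + e`, `x⁽⁰⁾ = 0` satisfies
`‖x − x⁽ⁿ⁾‖_{ℓ¹_w} ≤ C (√ζ/√ξ) σ_{s,M}(x)_{ℓ¹_w} + D √ζ ‖e‖₂ + 2√ζ ρⁿ ‖x‖₂`. -/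
theorem stmt12 {m N : ℕ} (r : ℕ) (M s : ℕ → ℕ) (hM : LevelsOK N r M) (hr : 0 < r)
    (hs : ∀ k < r, 1 ≤ s k)
    (w : Fin N → ℝ) (wl : ℕ → ℝ) (hwpos : ∀ k < r, 0 < wl k)
    (hw : ∀ k < r, ∀ i ∈ level N M k, w i = wl k)
    (A : Matrix (Fin m) (Fin N) ℂ)
    (hA : ricl A r M (fun k => 6 * s k) < 1 / Real.sqrt 3) :
    ∃ C D : ℝ, 0 < C ∧ 0 < D ∧
      ∀ (x : Fin N → ℂ) (e : Fin m → ℂ) (X : ℕ → Fin N → ℂ),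
        IHTLSeq A r M (fun k => 2 * s k) (A.mulVec x + e) X → X 0 = 0 →
        ∀ n : ℕ,
          wn1 w (x - X n) ≤
            C * (Real.sqrt (zeta r s wl) / Real.sqrt (xiMin r s wl)) *
                bestApprox r M s w x +
              D * Real.sqrt (zeta r s wl) * n2 e +
              2 * Real.sqrt (zeta r s wl) *
                (Real.sqrt 3 * ricl A r M (fun k => 6 * s k)) ^ n * n2 x := by
  classical
  obtain ⟨hδ0, hRIP⟩ := ricl_spec (r := r) (M := M) A (fun k => 6 * s k)
  set δ := ricl A r M (fun k => 6 * s k) with hδdef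
  have h3pos : (0:ℝ) < Real.sqrt 3 := Real.sqrt_pos.mpr (by norm_num)
  set ρ := Real.sqrt 3 * δ with hρdef
  have hρ0 : 0 ≤ ρ := mul_nonneg h3pos.le hδ0
  have hρ1 : ρ < 1 := by
    rw [hρdef]
    calc Real.sqrt 3 * δ < Real.sqrt 3 * (1 / Real.sqrt 3) :=
          mul_lt_mul_of_pos_left hA h3pos
      _ = 1 := by field_simp
  have h1ρ : (0:ℝ) < 1 - ρ := by linarith
  have h1δ : (0:ℝ) < 1 + δ := by linarith
  have hsq1δ : (0:ℝ) < Real.sqrt (1 + δ) := Real.sqrt_pos.mpr h1δ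
  have hwnn : ∀ i : Fin N, 0 ≤ w i := by
    intro i
    obtain ⟨k, hk, hik⟩ := exists_level hM i
    rw [hw k hk i hik]
    exact le_of_lt (hwpos k hk)
  have hξpos : 0 < xiMin r s wl := by
    rw [xiMin, dif_pos (Finset.nonempty_range_iff.mpr (by omega : r ≠ 0))]
    rw [Finset.lt_inf'_iff]
    intro k hk
    rw [Finset.mem_range] at hk
    have := hs k hk
    have := hwpos k hk
    positivity
  have hξζ : xiMin r s wl ≤ zeta r s wl := by
    have hne : (Finset.range r).Nonempty := Finset.nonempty_range_iff.mpr (by omega)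
    obtain ⟨k0, hk0, hk0eq⟩ := Finset.exists_mem_eq_inf' hne (fun k => wl k ^ 2 * (s k : ℝ))
    rw [xiMin, dif_pos hne, hk0eq]
    unfold zeta
    apply Finset.single_le_sum _ hk0
    intro k hk
    rw [Finset.mem_range] at hk
    have := hwpos k hk
    positivity
  set sξ := Real.sqrt (xiMin r s wl) with hsξ
  set sζ := Real.sqrt (zeta r s wl) with hsζ
  have hsξpos : 0 < sξ := Real.sqrt_pos.mpr hξpos
  have hsζpos : 0 < sζ := Real.sqrt_pos.mpr (lt_of_lt_of_le hξpos hξζ)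
  have hfrac1 : 1 ≤ sζ / sξ := (one_le_div hsξpos).mpr (Real.sqrt_le_sqrt hξζ)
  set Creal : ℝ := 1 + 2 * Real.sqrt 3 * (1 + δ) / (1 - ρ) with hCreal
  set Dreal : ℝ := 2 * Real.sqrt 3 * Real.sqrt (1 + δ) / (1 - ρ) with hDreal
  have hCpos : 0 < Creal := by rw [hCreal]; positivity
  have hDpos : 0 < Dreal := by rw [hDreal]; positivity
  refine ⟨Creal, Dreal, hCpos, hDpos, ?_⟩
  intro x e X hIH hX0 n
  obtain ⟨T, Sf, J, z, hTS, hTcard, hTcmp, hScard, hdecomp, hzsparse, htails⟩ :=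
    tail_package hM hr hs hwpos hw x
  set f := proj Sf x with hf
  set σ := wn1 w (x - proj T x) with hσ
  have hσnn : 0 ≤ σ := wn1_nonneg hwnn _
  have hbest : σ ≤ bestApprox r M s w x := best_lb hM hwpos hw x T hTcard hTcmp
  have hBnn : 0 ≤ bestApprox r M s w x := le_trans hσnn hbest
  set e' : Fin m → ℂ := A.mulVec (x - f) + e with he'def
  have hsparse6 : ∀ j, Sparse r M (fun k => 6 * s k) (z j) := by
    intro j k hk
    calc (supp (z j) ∩ level N M k).card ≤ s k := hzsparse j k hk
      _ ≤ 6 * s k := by omega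
  have hztails : ∑ j ∈ Finset.range J, n2 (z j) ≤ σ / sξ := htails
  have htail2 : n2 (x - f) ≤ σ / sξ := by
    rw [hdecomp]
    exact le_trans (n2_sum_le _ _) hztails
  have hAtail : n2 (A.mulVec (x - f)) ≤ Real.sqrt (1 + δ) * (σ / sξ) := by
    rw [hdecomp]
    have hmv : A.mulVec (∑ j ∈ Finset.range J, z j) = ∑ j ∈ Finset.range J, A.mulVec (z j) := by
      calc A.mulVec (∑ j ∈ Finset.range J, z j)
          = A.mulVecLin (∑ j ∈ Finset.range J, z j) := by rw [Matrix.mulVecLin_apply]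
        _ = ∑ j ∈ Finset.range J, A.mulVecLin (z j) := map_sum _ _ _
        _ = ∑ j ∈ Finset.range J, A.mulVec (z j) := by
            apply Finset.sum_congr rfl
            intro j _
            rw [Matrix.mulVecLin_apply]
    rw [hmv]
    calc n2 (∑ j ∈ Finset.range J, A.mulVec (z j))
        ≤ ∑ j ∈ Finset.range J, n2 (A.mulVec (z j)) := n2_sum_le _ _
      _ ≤ ∑ j ∈ Finset.range J, Real.sqrt (1 + δ) * n2 (z j) := by
          apply Finset.sum_le_sum
          intro j _
          exact normAz_le hRIP hδ0 (hsparse6 j)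
      _ = Real.sqrt (1 + δ) * ∑ j ∈ Finset.range J, n2 (z j) := by rw [Finset.mul_sum]
      _ ≤ Real.sqrt (1 + δ) * (σ / sξ) :=
          mul_le_mul_of_nonneg_left hztails hsq1δ.le
  have he' : n2 e' ≤ Real.sqrt (1 + δ) * (σ / sξ) + n2 e := by
    rw [he'def]
    exact le_trans (n2_add_le _ _) (by linarith [hAtail])
  -- X support package
  have hXsupp : ∀ nn : ℕ, ∃ Q : Finset (Fin N), supp (X nn) ⊆ Q ∧
      ∀ k < r, (Q ∩ level N M k).card ≤ 2 * s k := by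
    intro nn
    cases nn with
    | zero =>
        refine ⟨∅, ?_, by simp⟩
        intro i hi
        rw [mem_supp, hX0] at hi
        exact absurd rfl hi
    | succ nn =>
        obtain ⟨T1, hT1, hXeq⟩ := hIH nn
        refine ⟨T1, ?_, ?_⟩
        · rw [hXeq]; exact supp_proj_subset _ _
        · intro k hk
          have h2 : (T1 ∩ level N M k).card = min (2 * s k) (level N M k).card := hT1.1 k hk
          omega
  set a : ℕ → ℝ := fun nn => n2 (f - X nn) with ha
  set τ : ℝ := Real.sqrt 3 * ((1 + δ) * (σ / sξ) + Real.sqrt (1 + δ) * n2 e) with hτ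
  have hτnn : 0 ≤ τ := by
    rw [hτ]
    have := n2_nonneg e
    have : 0 ≤ σ / sξ := div_nonneg hσnn hsξpos.le
    positivity
  have hrec : ∀ nn, a (nn + 1) ≤ ρ * a nn + τ := by
    intro nn
    obtain ⟨T1, hT1top, hXeq⟩ := hIH nn
    obtain ⟨Qn, hQsub, hQcard⟩ := hXsupp nn
    set u : Fin N → ℂ :=
      X nn + A.conjTranspose.mulVec (A.mulVec x + e - A.mulVec (X nn)) with hu
    set V := Sf ∪ T1 with hV
    have hth : n2sq (f - X (nn + 1)) ≤ 3 * n2sq (proj V (u - f)) := by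
      rw [hXeq]
      exact thresh_sq hM u f Sf T1 (fun k => 2 * s k) hScard hT1top (supp_proj_subset _ _)
    set b : Fin N → ℂ := X nn - f with hb
    have hud : u - f = (b - A.conjTranspose.mulVec (A.mulVec b))
        + A.conjTranspose.mulVec e' := by
      rw [hu, hb, he'def]
      simp only [Matrix.mulVec_sub, Matrix.mulVec_add]
      funext i
      simp only [Pi.add_apply, Pi.sub_apply]
      ring
    -- sparsity bookkeeping
    have hU3 : SparseSet N r M (fun k => 6 * s k) ((Sf ∪ T1) ∪ (Qn ∪ Sf)) := by
      intro k hk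
      have e1 : ((Sf ∪ T1) ∪ (Qn ∪ Sf)) ∩ level N M k
          ⊆ (Sf ∩ level N M k) ∪ (T1 ∩ level N M k) ∪ (Qn ∩ level N M k) := by
        intro i hi
        rw [Finset.mem_inter] at hi
        rcases Finset.mem_union.mp hi.1 with h | h
        · rcases Finset.mem_union.mp h with h' | h'
          · exact Finset.mem_union_left _ (Finset.mem_union_left _
              (Finset.mem_inter.mpr ⟨h', hi.2⟩))
          · exact Finset.mem_union_left _ (Finset.mem_union_right _
              (Finset.mem_inter.mpr ⟨h', hi.2⟩))
        · rcases Finset.mem_union.mp h with h' | h'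
          · exact Finset.mem_union_right _ (Finset.mem_inter.mpr ⟨h', hi.2⟩)
          · exact Finset.mem_union_left _ (Finset.mem_union_left _
              (Finset.mem_inter.mpr ⟨h', hi.2⟩))
      have c1 : (Sf ∩ level N M k).card ≤ 2 * s k := by
        have := hScard k hk
        omega
      have c2 : (T1 ∩ level N M k).card ≤ 2 * s k := by
        have h2 : (T1 ∩ level N M k).card = min (2 * s k) (level N M k).card := hT1top.1 k hk
        omega
      have c3 := hQcard k hk
      calc (((Sf ∪ T1) ∪ (Qn ∪ Sf)) ∩ level N M k).card
          ≤ ((Sf ∩ level N M k) ∪ (T1 ∩ level N M k) ∪ (Qn ∩ level N M k)).card :=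
            Finset.card_le_card e1
        _ ≤ ((Sf ∩ level N M k) ∪ (T1 ∩ level N M k)).card + (Qn ∩ level N M k).card :=
            Finset.card_union_le _ _
        _ ≤ (Sf ∩ level N M k).card + (T1 ∩ level N M k).card + (Qn ∩ level N M k).card := by
            have := Finset.card_union_le (Sf ∩ level N M k) (T1 ∩ level N M k)
            omega
        _ ≤ 6 * s k := by omega
    have hVb6 : SparseSet N r M (fun k => 6 * s k) (V ∪ supp b) := by
      apply sparse_subset _ hU3
      apply Finset.union_subset_union subset_rfl
      calc supp b ⊆ supp (X nn) ∪ supp f := by rw [hb]; exact supp_sub_subset _ _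
        _ ⊆ Qn ∪ Sf := Finset.union_subset_union hQsub (supp_proj_subset _ _)
    have hV6 : SparseSet N r M (fun k => 6 * s k) V := by
      apply sparse_subset _ hU3
      exact Finset.subset_union_left
    have hproj : proj V (u - f)
        = proj V (b - A.conjTranspose.mulVec (A.mulVec b)) + proj V (A.conjTranspose.mulVec e') := by
      rw [hud, proj_add]
    have hoff := proj_offdiag (b := b) (W := V) hRIP hδ0 hVb6
    have hadj := proj_adjoint (W := V) hRIP hδ0 e' hV6
    have hnb : n2 b = a nn := by
      rw [hb, ha]
      exact n2_sub_rev _ _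
    have hn2V : n2 (proj V (u - f)) ≤ δ * a nn + Real.sqrt (1 + δ) * n2 e' := by
      rw [hproj]
      calc n2 (proj V (b - A.conjTranspose.mulVec (A.mulVec b)) + proj V (A.conjTranspose.mulVec e'))
          ≤ n2 (proj V (b - A.conjTranspose.mulVec (A.mulVec b)))
            + n2 (proj V (A.conjTranspose.mulVec e')) := n2_add_le _ _
        _ ≤ δ * n2 b + Real.sqrt (1 + δ) * n2 e' := by
            apply add_le_add hoff hadj
        _ = δ * a nn + Real.sqrt (1 + δ) * n2 e' := by rw [hnb]
    have h3' : n2 (f - X (nn + 1)) ≤ Real.sqrt 3 * n2 (proj V (u - f)) := by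
      have h4 := Real.sqrt_le_sqrt hth
      rw [Real.sqrt_mul (by norm_num : (0:ℝ) ≤ 3)] at h4
      exact h4
    have hss : Real.sqrt (1 + δ) * Real.sqrt (1 + δ) = 1 + δ :=
      Real.mul_self_sqrt h1δ.le
    calc a (nn + 1) = n2 (f - X (nn + 1)) := rfl
      _ ≤ Real.sqrt 3 * n2 (proj V (u - f)) := h3'
      _ ≤ Real.sqrt 3 * (δ * a nn + Real.sqrt (1 + δ) * n2 e') :=
          mul_le_mul_of_nonneg_left hn2V h3pos.le
      _ ≤ Real.sqrt 3 * (δ * a nn + Real.sqrt (1 + δ)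
            * (Real.sqrt (1 + δ) * (σ / sξ) + n2 e)) := by
          apply mul_le_mul_of_nonneg_left _ h3pos.le
          have := mul_le_mul_of_nonneg_left he' hsq1δ.le
          linarith
      _ = ρ * a nn + τ := by
          rw [hρdef, hτ]
          linear_combination (Real.sqrt 3 * (σ / sξ)) * hss
  have ha0 : a 0 ≤ n2 x := by
    have : a 0 = n2 (f - X 0) := rfl
    rw [this, hX0, sub_zero, hf]
    exact n2_proj_le _ _
  have hiter : ∀ nn, a nn ≤ ρ ^ nn * n2 x + τ / (1 - ρ) := by
    intro nn
    induction nn with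
    | zero =>
        have h2 : 0 ≤ τ / (1 - ρ) := div_nonneg hτnn h1ρ.le
        simpa using by linarith [ha0]
    | succ nn ih =>
        have h1 := hrec nn
        have h2 : ρ * a nn ≤ ρ * (ρ ^ nn * n2 x + τ / (1 - ρ)) :=
          mul_le_mul_of_nonneg_left ih hρ0
        have key : ρ * (ρ ^ nn * n2 x + τ / (1 - ρ)) + τ
            = ρ ^ (nn + 1) * n2 x + τ / (1 - ρ) := by
          field_simp
          ring
        linarith
  -- final bound
  obtain ⟨Qn, hQsub, hQcard⟩ := hXsupp n
  have hfX : wn1 w (f - X n) ≤ 2 * sζ * a n := by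
    apply wn1_le_sqrt_zeta hM hwpos hw _ (Sf ∪ Qn)
    · calc supp (f - X n) ⊆ supp f ∪ supp (X n) := supp_sub_subset _ _
        _ ⊆ Sf ∪ Qn := Finset.union_subset_union (supp_proj_subset _ _) hQsub
    · intro k hk
      have e1 : (Sf ∪ Qn) ∩ level N M k
          ⊆ (Sf ∩ level N M k) ∪ (Qn ∩ level N M k) := by
        intro i hi
        rw [Finset.mem_inter] at hi
        rcases Finset.mem_union.mp hi.1 with h | h
        · exact Finset.mem_union_left _ (Finset.mem_inter.mpr ⟨h, hi.2⟩)
        · exact Finset.mem_union_right _ (Finset.mem_inter.mpr ⟨h, hi.2⟩)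
      have c1 : (Sf ∩ level N M k).card ≤ 2 * s k := by
        have := hScard k hk
        omega
      have c3 := hQcard k hk
      calc ((Sf ∪ Qn) ∩ level N M k).card
          ≤ ((Sf ∩ level N M k) ∪ (Qn ∩ level N M k)).card := Finset.card_le_card e1
        _ ≤ (Sf ∩ level N M k).card + (Qn ∩ level N M k).card := Finset.card_union_le _ _
        _ ≤ 4 * s k := by omega
  have hxf : wn1 w (x - f) ≤ σ := by
    rw [hf, sub_proj_eq, wn1_proj, hσ, sub_proj_eq, wn1_proj]
    apply Finset.sum_le_sum_of_subset_of_nonneg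
    · exact Finset.sdiff_subset_sdiff subset_rfl hTS
    · intro i _ _
      exact mul_nonneg (hwnn i) (norm_nonneg _)
  have htri : wn1 w (x - X n) ≤ wn1 w (x - f) + wn1 w (f - X n) := by
    have hsplit : x - X n = (x - f) + (f - X n) := by
      funext i
      simp only [Pi.sub_apply, Pi.add_apply]
      ring
    rw [hsplit]
    exact wn1_add_le hwnn _ _
  have main1 : wn1 w (x - X n) ≤ σ + 2 * sζ * (ρ ^ n * n2 x + τ / (1 - ρ)) := by
    have h2 : wn1 w (f - X n) ≤ 2 * sζ * (ρ ^ n * n2 x + τ / (1 - ρ)) :=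
      le_trans hfX (mul_le_mul_of_nonneg_left (hiter n) (by positivity))
    linarith
  have expand : σ + 2 * sζ * (ρ ^ n * n2 x + τ / (1 - ρ))
      = σ + (2 * Real.sqrt 3 * (1 + δ) / (1 - ρ)) * (sζ / sξ) * σ
        + Dreal * sζ * n2 e + 2 * sζ * ρ ^ n * n2 x := by
    rw [hτ, hDreal]
    field_simp
    ring
  have hgoal2 : σ + (2 * Real.sqrt 3 * (1 + δ) / (1 - ρ)) * (sζ / sξ) * σ
      ≤ Creal * (sζ / sξ) * bestApprox r M s w x := by
    have t0 : 0 < sζ / sξ := div_pos hsζpos hsξpos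
    have t1 : σ ≤ (sζ / sξ) * σ := le_mul_of_one_le_left hσnn hfrac1
    have t2 : (sζ / sξ) * σ ≤ (sζ / sξ) * bestApprox r M s w x :=
      mul_le_mul_of_nonneg_left hbest t0.le
    have t3 : 0 ≤ 2 * Real.sqrt 3 * (1 + δ) / (1 - ρ) := by positivity
    have t4 : (2 * Real.sqrt 3 * (1 + δ) / (1 - ρ)) * ((sζ / sξ) * σ)
        ≤ (2 * Real.sqrt 3 * (1 + δ) / (1 - ρ)) * ((sζ / sξ) * bestApprox r M s w x) :=
      mul_le_mul_of_nonneg_left t2 t3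
    rw [hCreal]
    nlinarith [t1, t2, t4]
  calc wn1 w (x - X n) ≤ σ + 2 * sζ * (ρ ^ n * n2 x + τ / (1 - ρ)) := main1
    _ = σ + (2 * Real.sqrt 3 * (1 + δ) / (1 - ρ)) * (sζ / sξ) * σ
        + Dreal * sζ * n2 e + 2 * sζ * ρ ^ n * n2 x := expand
    _ ≤ Creal * (sζ / sξ) * bestApprox r M s w x
        + Dreal * sζ * n2 e + 2 * sζ * ρ ^ n * n2 x := by linarith [hgoal2]

end SIL
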